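/- arXiv:2310.18568 — 12 statements merged into one kernel-verified Lean document; each statement's English description precedes it below -/
import Mathlib

section
/- Let n ≥ 2 be an even integer and let F(x) = x^7 on F_{2^n}. For all a, b ∈ F_{2^n} with ab(a+b) ≠ 0, if c = a/b satisfies c^2 + c + 1 = 0, then ∇_F(a,b) = 4. -/
/-!
In characteristic 2 the second-order difference of `x ↦ x ^ 7` in directions `a, b` factors as
`a b (a + b) (x (x + a) (x + b) (x + a + b) + (a ^ 2 + a b + b ^ 2) ^ 2)`.
The hypothesis on `c = a / b` says exactly that `a ^ 2 + a b + b ^ 2 = 0`, so the zeros of the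
difference are the four distinct points of the subgroup `{0, a, b, a + b}`.
-/

open Finset

namespace CharTwo

variable {R : Type*} [CommRing R] [CharP R 2]

theorem add_pow_seven_second_diff (x a b : R) :
    (x + a + b) ^ 7 + (x + b) ^ 7 + (x + a) ^ 7 + x ^ 7 =
      a * b * (a + b) * (x * (x + a) * (x + b) * (x + a + b) + (a ^ 2 + a * b + b ^ 2) ^ 2) := by
  rw [← sub_eq_zero]
  ring_nf
  reduce_mod_char!

theorem mul_add_mul_add_mul_add_eq_zero_iff [NoZeroDivisors R] {x a b : R} :
    x * (x + a) * (x + b) * (x + a + b) = 0 ↔ x = 0 ∨ x = a ∨ x = b ∨ x = a + b := by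
  simp only [mul_eq_zero, CharTwo.add_eq_zero, add_assoc, or_assoc]

theorem card_insert_add_eq_four [DecidableEq R] {a b : R} (ha : a ≠ 0) (hb : b ≠ 0) (hab : a ≠ b) :
    ({0, a, b, a + b} : Finset R).card = 4 := by
  rw [card_eq_four]
  refine ⟨_, _, _, _, ha.symm, hb.symm, ?_, hab, ?_, ?_, rfl⟩
  · rwa [ne_comm, Ne, CharTwo.add_eq_zero]
  · simpa using hb
  · simpa [add_comm a b] using ha

end CharTwo

theorem stmt_0_general (n : ℕ)
    (F : Type) [Field F] [Fintype F] [DecidableEq F]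
    (hcard : Fintype.card F = 2 ^ n)
    (a b : F) (hab : a * b * (a + b) ≠ 0)
    (c : F) (hc : c = a / b) (hroot : c ^ 2 + c + 1 = 0) :
    (Finset.univ.filter (fun x : F =>
      (x + a + b) ^ 7 + (x + b) ^ 7 + (x + a) ^ 7 + x ^ 7 = 0)).card = 4 := by
  have : CharP F 2 := charP_of_card_eq_prime_pow hcard
  obtain ⟨⟨ha, hb⟩, hsum⟩ : (a ≠ 0 ∧ b ≠ 0) ∧ a + b ≠ 0 := by simpa using hab
  have hquad : a ^ 2 + a * b + b ^ 2 = 0 := by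
    subst hc
    field_simp at hroot
    linear_combination hroot
  have hzeros : univ.filter (fun x : F =>
      (x + a + b) ^ 7 + (x + b) ^ 7 + (x + a) ^ 7 + x ^ 7 = 0) = {0, a, b, a + b} := by
    ext x
    rw [mem_filter, CharTwo.add_pow_seven_second_diff, hquad, zero_pow two_ne_zero, add_zero,
      mul_eq_zero_iff_left hab, CharTwo.mul_add_mul_add_mul_add_eq_zero_iff]
    simp
  rw [hzeros]
  exact CharTwo.card_insert_add_eq_four ha hb (by rwa [Ne, ← CharTwo.add_eq_zero])

theorem stmt_0 (n : ℕ) (hn : 2 ≤ n) (hne : Even n)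
    (F : Type) [Field F] [Fintype F] [DecidableEq F]
    (hcard : Fintype.card F = 2 ^ n)
    (a b : F) (hab : a * b * (a + b) ≠ 0)
    (c : F) (hc : c = a / b) (hroot : c ^ 2 + c + 1 = 0) :
    (Finset.univ.filter (fun x : F =>
      (x + a + b) ^ 7 + (x + b) ^ 7 + (x + a) ^ 7 + x ^ 7 = 0)).card = 4 :=
  stmt_0_general n F hcard a b hab c hc hroot
end

section
/- Let n be a positive integer and let F(x) = x^7 on F_{2^n}. Let a, b ∈ F_{2^n} with ab(a+b) ≠ 0, set c = a/b and assume c^2 + c + 1 ≠ 0. Put a_1 = c^2 + c, a_0 = (c^2+c+1)^2, ω_1 = a_0/a_1^2, ω_2 = a_0 c^2/a_1^2, ω_3 = a_0 (c+1)^2/a_1^2. If Tr_1^n(ω_1) = Tr_1^n(ω_2) = Tr_1^n(ω_3) = 0, then ∇_F(a,b) = 4. -/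
/-!
In characteristic 2 the second difference of `x ↦ x⁷` in directions `a, b` equals
`ab(a+b) (V(x) + (a² + ab + b²)²)` with `V(x) = x(x+a)(x+b)(x+a+b)`, an additive polynomial
with kernel `{0, a, b, a+b}`. Hence as soon as `V(r) = (a² + ab + b²)²` for some `r`, the zero
set is the coset `r + {0, a, b, a+b}`, of size 4.

With `r = by` and `c = a/b` that equation reads `(y² + y)(y² + y + c² + c) = (c² + c + 1)²`,
solved by two Artin–Schreier steps: `s² + s = ω₁`, then `y² + y = (c² + c)s`. The second is
possible since `Tr((c² + c)s) = Tr(c²ω₁) = Tr(ω₂)`. An element of trace zero has the form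
`w² + w` because `w ↦ w² + w` is 2-to-1 into the trace kernel, which has at most `2ⁿ⁻¹` elements
as the root set of `∑ X^(2^i)`.
-/

open Finset Polynomial

section AbsTrace

variable {R : Type*} [CommSemiring R]

def absTrace (n : ℕ) (x : R) : R := ∑ i ∈ range n, x ^ 2 ^ i

theorem absTrace_add [CharP R 2] (n : ℕ) (x y : R) :
    absTrace n (x + y) = absTrace n x + absTrace n y := by
  simp only [absTrace, add_pow_char_pow, sum_add_distrib]

theorem absTrace_sq_add (n : ℕ) (x : R) :
    absTrace n (x ^ 2) + x = absTrace n x + x ^ 2 ^ n := by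
  have h := sum_range_succ' (fun i => x ^ 2 ^ i) n
  simp only [pow_zero, pow_one] at h
  simp only [absTrace, ← pow_mul, ← pow_succ', ← h, sum_range_succ]

end AbsTrace

section SubspacePoly

variable {R : Type*} [CommRing R]

/-- The subspace polynomial of `{0, a, b, a + b}`; in characteristic 2 it is additive in `x`. -/
def subspacePoly (a b x : R) : R := x * (x + a) * (x + b) * (x + a + b)

theorem subspacePoly_mul (a b x t : R) :
    subspacePoly (t * a) (t * b) (t * x) = t ^ 4 * subspacePoly a b x := by
  unfold subspacePoly; ring

variable [CharP R 2]

theorem subspacePoly_add (a b x y : R) :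
    subspacePoly a b (x + y) = subspacePoly a b x + subspacePoly a b y := by
  unfold subspacePoly
  linear_combination (norm := ring_nf)
  reduce_mod_char!

theorem subspacePoly_one (c y : R) :
    subspacePoly c 1 y = (y ^ 2 + y) * (y ^ 2 + y + (c ^ 2 + c)) := by
  unfold subspacePoly
  linear_combination (norm := ring_nf)
  reduce_mod_char!

theorem pow_seven_second_difference (a b x : R) :
    (x + a + b) ^ 7 + (x + b) ^ 7 + (x + a) ^ 7 + x ^ 7
      = a * b * (a + b) * (subspacePoly a b x + (a ^ 2 + a * b + b ^ 2) ^ 2) := by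
  unfold subspacePoly
  linear_combination (norm := ring_nf)
  reduce_mod_char!

variable [IsDomain R]

theorem sq_add_self_eq_sq_add_self_iff {v w : R} :
    w ^ 2 + w = v ^ 2 + v ↔ w = v ∨ w = v + 1 := by
  have key : w ^ 2 + w + (v ^ 2 + v) = (w + v) * (w + (v + 1)) := by
    linear_combination (norm := ring_nf)
    reduce_mod_char!
  rw [← CharTwo.add_eq_zero, key, mul_eq_zero, CharTwo.add_eq_zero, CharTwo.add_eq_zero]

theorem subspacePoly_eq_zero_iff {a b x : R} :
    subspacePoly a b x = 0 ↔ x = 0 ∨ x = a ∨ x = b ∨ x = a + b := by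
  simp only [subspacePoly, mul_eq_zero, add_assoc x a b, CharTwo.add_eq_zero]
  tauto

theorem card_filter_pow_seven_second_difference_eq_zero [Fintype R] [DecidableEq R] {a b r : R}
    (hab : a * b * (a + b) ≠ 0) (hr : subspacePoly a b r = (a ^ 2 + a * b + b ^ 2) ^ 2) :
    #{x | (x + a + b) ^ 7 + (x + b) ^ 7 + (x + a) ^ 7 + x ^ 7 = 0} = 4 := by
  have hzeros : ({x | (x + a + b) ^ 7 + (x + b) ^ 7 + (x + a) ^ 7 + x ^ 7 = 0} : Finset R)
      = {r, a + r, b + r, a + b + r} := by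
    ext x
    simp only [mem_filter, mem_univ, true_and, mem_insert, mem_singleton, pow_seven_second_difference,
      ← hr, ← subspacePoly_add, mul_eq_zero, hab, false_or, subspacePoly_eq_zero_iff,
      CharTwo.add_eq_iff_eq_add, zero_add]
  obtain ⟨⟨ha, hb⟩, hab'⟩ : (a ≠ 0 ∧ b ≠ 0) ∧ a ≠ b := by simpa [CharTwo.add_eq_zero] using hab
  rw [hzeros, card_insert_of_notMem, card_insert_of_notMem, card_insert_of_notMem, card_singleton]
  all_goals simp [ha, hb, hab', CharTwo.add_eq_zero]

end SubspacePoly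

section FiniteField

variable {F : Type*} [Field F] [Fintype F]

theorem absTrace_sq_add_self {n : ℕ} (hcard : Fintype.card F = 2 ^ n) (x : F) :
    absTrace n (x ^ 2 + x) = 0 := by
  have : CharP F 2 := charP_of_card_eq_prime_pow hcard
  have h := absTrace_sq_add n x
  rw [← hcard, FiniteField.pow_card] at h
  rw [absTrace_add, add_right_cancel h, CharTwo.add_self_eq_zero]

theorem card_filter_absTrace_eq_zero_le [DecidableEq F] (m : ℕ) :
    #{x : F | absTrace (m + 1) x = 0} ≤ 2 ^ m := by
  set p : F[X] := ∑ i ∈ range (m + 1), X ^ 2 ^ i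
  have hlower : (∑ i ∈ range m, (X : F[X]) ^ 2 ^ i).degree < (X ^ 2 ^ m : F[X]).degree := by
    rw [degree_X_pow]
    refine (degree_sum_le _ _).trans_lt ((Finset.sup_lt_iff (WithBot.bot_lt_coe _)).2 ?_)
    intro i hi
    rw [degree_X_pow, Nat.cast_lt]
    exact Nat.pow_lt_pow_right one_lt_two (mem_range.1 hi)
  have hp : p = ∑ i ∈ range m, X ^ 2 ^ i + X ^ 2 ^ m := sum_range_succ _ _
  have hmonic : p.Monic := hp ▸ (monic_X_pow _).add_of_right hlower
  have hdeg : p.natDegree = 2 ^ m := by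
    rw [hp, natDegree_add_eq_right_of_degree_lt hlower, natDegree_X_pow]
  have hroots : ({x : F | absTrace (m + 1) x = 0} : Finset F).val ⊆ p.roots := by
    intro x hx
    rw [mem_roots hmonic.ne_zero, IsRoot, eval_finsetSum]
    simpa [absTrace] using (mem_filter.1 hx).2
  exact hdeg ▸ card_le_degree_of_subset_roots hroots

theorem two_mul_card_image_sq_add_self [CharP F 2] [DecidableEq F] :
    2 * #(univ.image fun w : F => w ^ 2 + w) = Fintype.card F := by
  have hfiber : ∀ y ∈ univ.image fun w : F => w ^ 2 + w, #{w | w ^ 2 + w = y} = 2 := by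
    simp only [mem_image, mem_univ, true_and, forall_exists_index, forall_apply_eq_imp_iff]
    intro v
    simp only [sq_add_self_eq_sq_add_self_iff, filter_or, filter_eq', mem_univ, if_true]
    rw [card_union_of_disjoint (by simp), card_singleton, card_singleton]
  calc 2 * #(univ.image fun w : F => w ^ 2 + w)
      = ∑ y ∈ univ.image (fun w : F => w ^ 2 + w), #{w | w ^ 2 + w = y} := by
        rw [sum_congr rfl hfiber, sum_const, smul_eq_mul, mul_comm]
    _ = Fintype.card F := (card_eq_sum_card_image _ univ).symm

theorem exists_sq_add_self_eq_of_absTrace_eq_zero {n : ℕ} (hcard : Fintype.card F = 2 ^ n)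
    {z : F} (hz : absTrace n z = 0) : ∃ w, w ^ 2 + w = z := by
  classical
  have : CharP F 2 := charP_of_card_eq_prime_pow hcard
  obtain ⟨m, rfl⟩ : ∃ m, n = m + 1 := Nat.exists_eq_succ_of_ne_zero <| by
    rintro rfl
    exact (Fintype.one_lt_card (α := F)).ne' hcard
  have hsub : (univ.image fun w : F => w ^ 2 + w) ⊆ ({x | absTrace (m + 1) x = 0} : Finset F) := by
    simp [subset_iff, absTrace_sq_add_self hcard]
  have hcard_le : #{x : F | absTrace (m + 1) x = 0} ≤ #(univ.image fun w : F => w ^ 2 + w) := by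
    have := two_mul_card_image_sq_add_self (F := F)
    have := card_filter_absTrace_eq_zero_le (F := F) m
    rw [hcard, pow_succ] at *
    omega
  have hz' : z ∈ univ.image fun w : F => w ^ 2 + w := by
    rw [eq_of_subset_of_card_le hsub hcard_le]
    simpa using hz
  simpa using hz'

theorem exists_subspacePoly_one_eq_of_absTrace_eq_zero {n : ℕ}
    (hcard : Fintype.card F = 2 ^ n) {c ω : F}
    (hω : (c ^ 2 + c) ^ 2 * ω = (c ^ 2 + c + 1) ^ 2)
    (hTr₁ : absTrace n ω = 0) (hTr₂ : absTrace n (c ^ 2 * ω) = 0) :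
    ∃ y, subspacePoly c 1 y = (c ^ 2 + c + 1) ^ 2 := by
  have : CharP F 2 := charP_of_card_eq_prime_pow hcard
  obtain ⟨s, hs⟩ := exists_sq_add_self_eq_of_absTrace_eq_zero hcard hTr₁
  have hTr : absTrace n ((c ^ 2 + c) * s) = 0 := by
    -- the two traces agree because `(cs)² + cs` has trace zero
    have h : (c ^ 2 + c) * s = ((c * s) ^ 2 + c * s) + c ^ 2 * ω := by
      rw [← hs]
      linear_combination (norm := ring_nf)
      reduce_mod_char!
    rw [h, absTrace_add, absTrace_sq_add_self hcard, hTr₂, zero_add]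
  obtain ⟨y, hy⟩ := exists_sq_add_self_eq_of_absTrace_eq_zero hcard hTr
  refine ⟨y, ?_⟩
  rw [subspacePoly_one, hy, ← hω, ← hs]
  ring

end FiniteField

theorem stmt_1_general (n : ℕ)
    (F : Type) [Field F] [Fintype F] [DecidableEq F]
    (hcard : Fintype.card F = 2 ^ n)
    (a b : F) (hab : a * b * (a + b) ≠ 0)
    (c : F) (hc : c = a / b)
    (a₁ a₀ ω₁ ω₂ : F)
    (ha₁ : a₁ = c ^ 2 + c) (ha₀ : a₀ = (c ^ 2 + c + 1) ^ 2)
    (hω₁ : ω₁ = a₀ / a₁ ^ 2) (hω₂ : ω₂ = a₀ * c ^ 2 / a₁ ^ 2)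
    (htr₁ : ∑ i ∈ Finset.range n, ω₁ ^ 2 ^ i = 0)
    (htr₂ : ∑ i ∈ Finset.range n, ω₂ ^ 2 ^ i = 0) :
    (Finset.univ.filter (fun x : F =>
      (x + a + b) ^ 7 + (x + b) ^ 7 + (x + a) ^ 7 + x ^ 7 = 0)).card = 4 := by
  have : CharP F 2 := charP_of_card_eq_prime_pow hcard
  have hb : b ≠ 0 := by
    rintro rfl
    simp at hab
  obtain rfl : a = b * c := by rw [hc, mul_div_cancel₀ _ hb]
  subst ha₁ ha₀
  have hc₁ : c ^ 2 + c ≠ 0 := by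
    intro h
    apply hab
    linear_combination b ^ 3 * h
  have hω₁' : (c ^ 2 + c) ^ 2 * ω₁ = (c ^ 2 + c + 1) ^ 2 := by
    rw [hω₁, mul_div_cancel₀ _ (pow_ne_zero 2 hc₁)]
  have hω₂' : ω₂ = c ^ 2 * ω₁ := by rw [hω₂, hω₁]; ring
  obtain ⟨y, hy⟩ := exists_subspacePoly_one_eq_of_absTrace_eq_zero hcard hω₁' htr₁ (hω₂' ▸ htr₂)
  refine card_filter_pow_seven_second_difference_eq_zero hab (r := b * y) ?_
  have hscale := subspacePoly_mul c 1 y b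
  rw [mul_one] at hscale
  rw [hscale, hy]
  ring

theorem stmt_1 (n : ℕ) (hn : 0 < n)
    (F : Type) [Field F] [Fintype F] [DecidableEq F]
    (hcard : Fintype.card F = 2 ^ n)
    (a b : F) (hab : a * b * (a + b) ≠ 0)
    (c : F) (hc : c = a / b) (hroot : c ^ 2 + c + 1 ≠ 0)
    (a₁ a₀ ω₁ ω₂ ω₃ : F)
    (ha₁ : a₁ = c ^ 2 + c) (ha₀ : a₀ = (c ^ 2 + c + 1) ^ 2)
    (hω₁ : ω₁ = a₀ / a₁ ^ 2) (hω₂ : ω₂ = a₀ * c ^ 2 / a₁ ^ 2)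
    (hω₃ : ω₃ = a₀ * (c + 1) ^ 2 / a₁ ^ 2)
    (htr₁ : ∑ i ∈ Finset.range n, ω₁ ^ 2 ^ i = 0)
    (htr₂ : ∑ i ∈ Finset.range n, ω₂ ^ 2 ^ i = 0)
    (htr₃ : ∑ i ∈ Finset.range n, ω₃ ^ 2 ^ i = 0) :
    (Finset.univ.filter (fun x : F =>
      (x + a + b) ^ 7 + (x + b) ^ 7 + (x + a) ^ 7 + x ^ 7 = 0)).card = 4 :=
  stmt_1_general n F hcard a b hab c hc a₁ a₀ ω₁ ω₂ ha₁ ha₀ hω₁ hω₂ htr₁ htr₂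
end

section
/- Let n be a positive integer and let F(x) = x^7 on F_{2^n}. Let a, b ∈ F_{2^n} with ab(a+b) ≠ 0, set c = a/b and assume c^2 + c + 1 ≠ 0. Put a_1 = c^2 + c, a_0 = (c^2+c+1)^2, ω_1 = a_0/a_1^2, ω_2 = a_0 c^2/a_1^2, ω_3 = a_0 (c+1)^2/a_1^2. If Tr_1^n(ω_i) = 1 for some i ∈ {1,2,3}, then ∇_F(a,b) = 0. -/
/-!
Scaling by `b` reduces `(x+a+b)^7 + (x+b)^7 + (x+a)^7 + x^7 = 0` to the same equation in `y = x/b`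
with `a, b` replaced by `c, 1`. In characteristic 2 the left side factors as `c(c+1)` times
`z^2 + a₁ z + a₀` with `z = y^2 + y`, so a root `y` yields `w = z/a₁` with `w^2 + w = ω₁`, and then
also `(cw + y)^2 + (cw + y) = ω₂` and `((c+1)w + y)^2 + ((c+1)w + y) = ω₃`. Every element of the
form `s^2 + s` has absolute trace `s^(2^n) + s = 0`, contradicting the trace hypothesis.
-/

open Finset

section CharTwo
variable {R : Type*} [CommRing R] [CharP R 2]

theorem sum_range_sq_add_self_pow_two_pow (t : R) (n : ℕ) :
    ∑ i ∈ range n, (t ^ 2 + t) ^ 2 ^ i = t ^ 2 ^ n + t := by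
  induction n with
  | zero => simp [CharTwo.add_self_eq_zero]
  | succ n ih =>
    rw [sum_range_succ, ih, add_pow_char_pow, ← pow_mul, ← pow_succ']
    linear_combination t ^ 2 ^ n * CharTwo.two_eq_zero (R := R)

theorem pow_seven_second_diff_eq (y c : R) :
    (y + c + 1) ^ 7 + (y + 1) ^ 7 + (y + c) ^ 7 + y ^ 7 =
      c * (c + 1) * ((y ^ 2 + y) ^ 2 + (c ^ 2 + c) * (y ^ 2 + y) + (c ^ 2 + c + 1) ^ 2) := by
  rw [← sub_eq_zero]
  ring_nf
  reduce_mod_char!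

theorem sq_add_self_mul_add (d w y : R) (hwy : (d ^ 2 + d) * w = y ^ 2 + y) :
    (d * w + y) ^ 2 + (d * w + y) = d ^ 2 * (w ^ 2 + w) := by
  linear_combination -hwy + (d * w * y + d * w) * CharTwo.two_eq_zero (R := R)

end CharTwo

theorem FiniteField.sum_range_sq_add_self_pow_two_pow_eq_zero {F : Type*} [Field F] [Fintype F]
    [CharP F 2] {n : ℕ} (hcard : Fintype.card F = 2 ^ n) (t : F) :
    ∑ i ∈ range n, (t ^ 2 + t) ^ 2 ^ i = 0 := by
  rw [sum_range_sq_add_self_pow_two_pow, ← hcard, FiniteField.pow_card, CharTwo.add_self_eq_zero]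

theorem exists_sq_add_self_eq_of_pow_seven_second_diff_eq_zero {K : Type*} [Field K] [CharP K 2]
    {c y : K} (hc₀ : c ≠ 0) (hc₁ : c + 1 ≠ 0)
    (hy : (y + c + 1) ^ 7 + (y + 1) ^ 7 + (y + c) ^ 7 + y ^ 7 = 0) :
    ∃ w : K, w ^ 2 + w = (c ^ 2 + c + 1) ^ 2 / (c ^ 2 + c) ^ 2 ∧ (c ^ 2 + c) * w = y ^ 2 + y := by
  have hc : c ^ 2 + c ≠ 0 := by
    rw [show c ^ 2 + c = c * (c + 1) by ring]; exact mul_ne_zero hc₀ hc₁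
  have hz : (y ^ 2 + y) ^ 2 + (c ^ 2 + c) * (y ^ 2 + y) = (c ^ 2 + c + 1) ^ 2 := by
    rwa [pow_seven_second_diff_eq, mul_assoc, mul_eq_zero, mul_eq_zero, or_iff_right hc₀,
      or_iff_right hc₁, CharTwo.add_eq_zero] at hy
  refine ⟨(y ^ 2 + y) / (c ^ 2 + c), ?_, mul_div_cancel₀ _ hc⟩
  rw [← hz]
  field_simp

theorem stmt_2_general (n : ℕ)
    (F : Type) [Field F] [Fintype F] [DecidableEq F]
    (hcard : Fintype.card F = 2 ^ n)
    (a b : F) (hab : a * b * (a + b) ≠ 0)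
    (c : F) (hc : c = a / b)
    (a₁ a₀ ω₁ ω₂ ω₃ : F)
    (ha₁ : a₁ = c ^ 2 + c) (ha₀ : a₀ = (c ^ 2 + c + 1) ^ 2)
    (hω₁ : ω₁ = a₀ / a₁ ^ 2) (hω₂ : ω₂ = a₀ * c ^ 2 / a₁ ^ 2)
    (hω₃ : ω₃ = a₀ * (c + 1) ^ 2 / a₁ ^ 2)
    (htr : (∑ i ∈ Finset.range n, ω₁ ^ 2 ^ i = 1) ∨
           (∑ i ∈ Finset.range n, ω₂ ^ 2 ^ i = 1) ∨
           (∑ i ∈ Finset.range n, ω₃ ^ 2 ^ i = 1)) :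
    (Finset.univ.filter (fun x : F =>
      (x + a + b) ^ 7 + (x + b) ^ 7 + (x + a) ^ 7 + x ^ 7 = 0)).card = 0 := by
  have : CharP F 2 := charP_of_card_eq_prime_pow hcard
  have hb : b ≠ 0 := right_ne_zero_of_mul (left_ne_zero_of_mul hab)
  have hc₀ : c ≠ 0 := hc ▸ div_ne_zero (left_ne_zero_of_mul (left_ne_zero_of_mul hab)) hb
  have hc₁ : c + 1 ≠ 0 := hc ▸ div_add_one hb ▸ div_ne_zero (right_ne_zero_of_mul hab) hb
  rw [Finset.card_eq_zero, Finset.filter_eq_empty_iff]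
  intro x _ hx
  have hy : (x / b + c + 1) ^ 7 + (x / b + 1) ^ 7 + (x / b + c) ^ 7 + (x / b) ^ 7 = 0 := by
    rw [hc, ← mul_eq_zero_iff_left (pow_ne_zero 7 hb), ← hx]
    field_simp
  obtain ⟨w, hw, hwy⟩ := exists_sq_add_self_eq_of_pow_seven_second_diff_eq_zero hc₀ hc₁ hy
  have hω : ω₁ = w ^ 2 + w := by rw [hω₁, ha₀, ha₁, hw]
  have hω₂' : ω₂ = (c * w + x / b) ^ 2 + (c * w + x / b) := by
    rw [sq_add_self_mul_add _ _ _ hwy, ← hω, hω₂, hω₁, mul_div_right_comm, mul_comm]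
  have hω₃' : ω₃ = ((c + 1) * w + x / b) ^ 2 + ((c + 1) * w + x / b) := by
    have hd : (c + 1) ^ 2 + (c + 1) = c ^ 2 + c := by
      linear_combination (c + 1) * CharTwo.two_eq_zero (R := F)
    rw [sq_add_self_mul_add _ _ _ (by rwa [hd]), ← hω, hω₃, hω₁, mul_div_right_comm, mul_comm]
  simp only [hω, hω₂', hω₃', FiniteField.sum_range_sq_add_self_pow_two_pow_eq_zero hcard,
    zero_ne_one, or_self] at htr

theorem stmt_2 (n : ℕ) (hn : 0 < n)
    (F : Type) [Field F] [Fintype F] [DecidableEq F]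
    (hcard : Fintype.card F = 2 ^ n)
    (a b : F) (hab : a * b * (a + b) ≠ 0)
    (c : F) (hc : c = a / b) (hroot : c ^ 2 + c + 1 ≠ 0)
    (a₁ a₀ ω₁ ω₂ ω₃ : F)
    (ha₁ : a₁ = c ^ 2 + c) (ha₀ : a₀ = (c ^ 2 + c + 1) ^ 2)
    (hω₁ : ω₁ = a₀ / a₁ ^ 2) (hω₂ : ω₂ = a₀ * c ^ 2 / a₁ ^ 2)
    (hω₃ : ω₃ = a₀ * (c + 1) ^ 2 / a₁ ^ 2)
    (htr : (∑ i ∈ Finset.range n, ω₁ ^ 2 ^ i = 1) ∨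
           (∑ i ∈ Finset.range n, ω₂ ^ 2 ^ i = 1) ∨
           (∑ i ∈ Finset.range n, ω₃ ^ 2 ^ i = 1)) :
    (Finset.univ.filter (fun x : F =>
      (x + a + b) ^ 7 + (x + b) ^ 7 + (x + a) ^ 7 + x ^ 7 = 0)).card = 0 :=
  stmt_2_general n F hcard a b hab c hc a₁ a₀ ω₁ ω₂ ω₃ ha₁ ha₀ hω₁ hω₂ hω₃ htr
end

section
/- Let m ≥ 1, n = 2m, and let F(x) = x^{2^{m+1}+3} on F_{2^n}. For a, b ∈ F_{2^n} with ab(a+b) ≠ 0, if c = a/b lies in the subfield F_{2^m} of F_{2^n} (i.e. c^{2^m} = c), then ∇_F(a,b) = 2^m. -/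
/-!
Write `q = 2 ^ m`, `x = y b` and `a = c b`. Since `c ∈ 𝔽_q`, the `q`-th power map fixes `c`, so
`(y + ε) ^ q = y ^ q + ε` for every `ε ∈ {0, 1, c, c + 1}`; with `F(u) = (u ^ q) ^ 2 u ^ 3` this turns
the second-order difference into a polynomial identity in characteristic `2`:
`∑ F(x + ε b) = b ^ (2q + 3) c (c + 1) (y ^ q + y + z) ^ 2`, where `z ^ 2 = c ^ 2 + c + 1`.
So the zeros are the solutions of `Tr(y) = z` for the relative trace `Tr(y) = y ^ q + y` of
`𝔽_{q²}/𝔽_q`, and `z ∈ 𝔽_q`. The trace is additive, its kernel has at most `q` elements (roots of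
`X ^ q + X`) and contains its image, while `|ker| · |im| = q²`; hence `im = ker = 𝔽_q` and every
fiber over `𝔽_q` has exactly `q` elements.
-/

open Finset Polynomial

lemma card_filter_pow_two_pow_add_self_eq_zero_le {R : Type*} [CommRing R] [IsDomain R]
    [Fintype R] [DecidableEq R] {m : ℕ} (hm : 1 ≤ m) : #{y : R | y ^ 2 ^ m + y = 0} ≤ 2 ^ m := by
  have hdeg : (X ^ 2 ^ m + X : R[X]).natDegree = 2 ^ m := by
    rw [natDegree_add_eq_left_of_natDegree_lt] <;>
      simp [Nat.one_lt_two_pow_iff.mpr (by omega : m ≠ 0)]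
  have hne : (X ^ 2 ^ m + X : R[X]) ≠ 0 := fun h => by
    simp only [h, natDegree_zero] at hdeg
    exact (pow_pos two_pos m).ne hdeg
  rw [← hdeg]
  refine card_le_degree_of_subset_roots fun y hy => ?_
  simp_all

section RelTrace

variable {K : Type*} [Field K] [CharP K 2] {m : ℕ}

variable (K) in
def relTrace (m : ℕ) : K →+ K :=
  (iterateFrobenius K 2 m).toAddMonoidHom + AddMonoidHom.id K

@[simp]
lemma relTrace_apply (y : K) : relTrace K m y = y ^ 2 ^ m + y := rfl

variable [Fintype K]

lemma nat_card_ker_relTrace_eq_card_filter [DecidableEq K] :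
    Nat.card (relTrace K m).ker = #{y : K | y ^ 2 ^ m + y = 0} := by
  rw [← Nat.card_eq_finsetCard]
  exact Nat.card_congr (Equiv.subtypeEquivRight fun y => by simp)

lemma relTrace_range_le_ker (hcard : Fintype.card K = 2 ^ (2 * m)) :
    (relTrace K m).range ≤ (relTrace K m).ker := by
  rintro _ ⟨y, rfl⟩
  have hy : (y ^ 2 ^ m) ^ 2 ^ m = y := by
    rw [← pow_mul, ← pow_add, ← two_mul, ← hcard, FiniteField.pow_card]
  rw [AddMonoidHom.mem_ker, relTrace_apply, relTrace_apply, add_pow_char_pow, hy, add_comm y]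
  exact CharTwo.add_self_eq_zero _

lemma nat_card_ker_mul_nat_card_range_relTrace (hcard : Fintype.card K = 2 ^ (2 * m)) :
    Nat.card (relTrace K m).ker * Nat.card (relTrace K m).range = 2 ^ m * 2 ^ m := by
  rw [← AddSubgroup.index_ker, AddSubgroup.card_mul_index, Nat.card_eq_fintype_card, hcard,
    two_mul, pow_add]

lemma nat_card_ker_relTrace (hm : 1 ≤ m) (hcard : Fintype.card K = 2 ^ (2 * m)) :
    Nat.card (relTrace K m).ker = 2 ^ m := by
  classical
  have hprod := nat_card_ker_mul_nat_card_range_relTrace hcard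
  have hrange := AddSubgroup.card_le_of_le (relTrace_range_le_ker hcard)
  have hker : Nat.card (relTrace K m).ker ≤ 2 ^ m :=
    nat_card_ker_relTrace_eq_card_filter.trans_le (card_filter_pow_two_pow_add_self_eq_zero_le hm)
  exact le_antisymm hker (by nlinarith)

lemma relTrace_range_eq_ker (hm : 1 ≤ m) (hcard : Fintype.card K = 2 ^ (2 * m)) :
    (relTrace K m).range = (relTrace K m).ker := by
  have hprod := nat_card_ker_mul_nat_card_range_relTrace hcard
  rw [nat_card_ker_relTrace hm hcard] at hprod
  refine AddSubgroup.eq_of_le_of_card_ge (relTrace_range_le_ker hcard) ?_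
  rw [nat_card_ker_relTrace hm hcard, Nat.eq_of_mul_eq_mul_left (by positivity) hprod]

lemma card_filter_pow_two_pow_add_self_eq [DecidableEq K] (hm : 1 ≤ m)
    (hcard : Fintype.card K = 2 ^ (2 * m)) {z : K} (hz : z ^ 2 ^ m = z) :
    #{y : K | y ^ 2 ^ m + y = z} = 2 ^ m := by
  have hz_range : z ∈ (relTrace K m).range := by
    rw [relTrace_range_eq_ker hm hcard, AddMonoidHom.mem_ker, relTrace_apply, hz,
      CharTwo.add_self_eq_zero]
  calc #{y : K | y ^ 2 ^ m + y = z} = #{y : K | relTrace K m y = 0} :=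
        AddMonoidHom.card_fiber_eq_of_mem_range _ hz_range ⟨0, map_zero _⟩
    _ = Nat.card (relTrace K m).ker := nat_card_ker_relTrace_eq_card_filter.symm
    _ = 2 ^ m := nat_card_ker_relTrace hm hcard

end RelTrace

section SecondDifference

variable {R : Type*} [CommRing R] [CharP R 2] {m : ℕ}

lemma sq_mul_pow_three_second_diff (Y y c : R) :
    (Y + c + 1) ^ 2 * (y + c + 1) ^ 3 + (Y + 1) ^ 2 * (y + 1) ^ 3 + (Y + c) ^ 2 * (y + c) ^ 3
      + Y ^ 2 * y ^ 3 = c * (c + 1) * ((Y + y) ^ 2 + (c ^ 2 + c + 1)) := by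
  rw [← sub_eq_zero]
  ring_nf
  reduce_mod_char!

lemma pow_second_diff_of_pow_eq_self {c : R} (hc : c ^ 2 ^ m = c) (y : R) :
    (y + c + 1) ^ (2 ^ (m + 1) + 3) + (y + 1) ^ (2 ^ (m + 1) + 3) + (y + c) ^ (2 ^ (m + 1) + 3)
      + y ^ (2 ^ (m + 1) + 3) = c * (c + 1) * ((y ^ 2 ^ m + y) ^ 2 + (c ^ 2 + c + 1)) := by
  have hsplit (u : R) : u ^ (2 ^ (m + 1) + 3) = (u ^ 2 ^ m) ^ 2 * u ^ 3 := by
    rw [← pow_mul, ← pow_succ, pow_add]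
  simp only [hsplit, add_pow_char_pow, hc, one_pow]
  exact sq_mul_pow_three_second_diff _ _ _

lemma pow_second_diff_mul_of_pow_eq_self {c : R} (hc : c ^ 2 ^ m = c) (y b : R) :
    (y * b + c * b + b) ^ (2 ^ (m + 1) + 3) + (y * b + b) ^ (2 ^ (m + 1) + 3)
      + (y * b + c * b) ^ (2 ^ (m + 1) + 3) + (y * b) ^ (2 ^ (m + 1) + 3)
      = b ^ (2 ^ (m + 1) + 3) * (c * (c + 1) * ((y ^ 2 ^ m + y) ^ 2 + (c ^ 2 + c + 1))) := by
  rw [← pow_second_diff_of_pow_eq_self hc, show y * b + c * b + b = (y + c + 1) * b by ring,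
    show y * b + b = (y + 1) * b by ring, show y * b + c * b = (y + c) * b by ring]
  simp only [mul_pow]
  ring

lemma pow_two_pow_eq_self_of_sq [NoZeroDivisors R] {z : R} (hz : (z ^ 2) ^ 2 ^ m = z ^ 2) :
    z ^ 2 ^ m = z :=
  CharTwo.sq_injective (by simpa only [← pow_mul, mul_comm] using hz)

end SecondDifference

theorem stmt_4 (m n : ℕ) (hm : 1 ≤ m) (hn : n = 2 * m)
    (F : Type) [Field F] [Fintype F] [DecidableEq F]
    (hcard : Fintype.card F = 2 ^ n)
    (a b : F) (hab : a * b * (a + b) ≠ 0)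
    (c : F) (hc : c = a / b) (hsub : c ^ 2 ^ m = c) :
    (Finset.univ.filter (fun x : F =>
      (x + a + b) ^ (2 ^ (m + 1) + 3) + (x + b) ^ (2 ^ (m + 1) + 3) +
        (x + a) ^ (2 ^ (m + 1) + 3) + x ^ (2 ^ (m + 1) + 3) = 0)).card = 2 ^ m := by
  subst hn
  have : CharP F 2 := charP_of_card_eq_prime_pow hcard
  have ha : a ≠ 0 := left_ne_zero_of_mul (left_ne_zero_of_mul hab)
  have hb : b ≠ 0 := right_ne_zero_of_mul (left_ne_zero_of_mul hab)
  have hc0 : c ≠ 0 := hc ▸ div_ne_zero ha hb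
  obtain rfl : a = c * b := by rw [hc, div_mul_cancel₀ _ hb]
  have hc1 : c + 1 ≠ 0 := fun h => right_ne_zero_of_mul hab (by linear_combination b * h)
  obtain ⟨z, hz⟩ := FiniteField.isSquare_of_char_two (ringChar.eq F 2) (c ^ 2 + c + 1)
  rw [← sq] at hz
  have hz_fixed : z ^ 2 ^ m = z := pow_two_pow_eq_self_of_sq <| by
    rw [← hz, add_pow_char_pow, add_pow_char_pow, one_pow, ← pow_mul, mul_comm, pow_mul, hsub]
  have hmem (y : F) : y ^ 2 ^ m + y = z ↔
      (y * b + c * b + b) ^ (2 ^ (m + 1) + 3) + (y * b + b) ^ (2 ^ (m + 1) + 3) +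
        (y * b + c * b) ^ (2 ^ (m + 1) + 3) + (y * b) ^ (2 ^ (m + 1) + 3) = 0 := by
    rw [pow_second_diff_mul_of_pow_eq_self hsub, hz, ← CharTwo.add_sq]
    simp [hb, hc0, hc1, CharTwo.add_eq_zero]
  rw [← card_filter_pow_two_pow_add_self_eq hm hcard hz_fixed]
  exact (card_equiv (Equiv.mulRight₀ b hb) (by simp [hmem])).symm
end

section
/- Let m ≥ 1, n = 2m, and let F(x) = x^{2^{m+1}+3} on F_{2^n}. For a, b ∈ F_{2^n} with ab(a+b) ≠ 0, if c = a/b satisfies c^2 + c + 1 = 0 and c does not lie in the subfield F_{2^m} (i.e. c^{2^m} ≠ c, which can occur only when m is odd), then ∇_F(a,b) = 4. -/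
/-!
Write `q = 2 ^ (m + 1)` and `a = c * b`. In characteristic 2 the map `x ↦ x ^ q` is additive, and
`c ^ q = c` because `c ^ 2 ^ m` is the other root `c + 1` of `X ^ 2 + X + 1`. Expanding
`x ^ (q + 3) = x ^ q * x ^ 3` then shows that the second difference at `(a, b)` is
`b ^ 2 * (b * x ^ q + b ^ q * x)`, which vanishes iff `y = x / b` is fixed by `y ↦ y ^ q`.
Since `y ^ 2 ^ (2 * m) = y` on the field, such `y` satisfy `y ^ 4 = y`, so they form the
subfield `{0, 1, c, c + 1}` of order 4; conversely these four elements are fixed because `c` is.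
-/

open Finset

section CharTwo

variable {R : Type*} [CommRing R] [CharP R 2]

theorem secondDiff_pow_two_pow_add_three {c : R} {k : ℕ} (hc : c ^ 2 + c + 1 = 0)
    (hcq : c ^ 2 ^ k = c) (b x : R) :
    (x + c * b + b) ^ (2 ^ k + 3) + (x + b) ^ (2 ^ k + 3) + (x + c * b) ^ (2 ^ k + 3)
      + x ^ (2 ^ k + 3) = b ^ 2 * (b * x ^ 2 ^ k + b ^ 2 ^ k * x) := by
  simp only [pow_add _ (2 ^ k), add_pow_char_pow, mul_pow, hcq]
  linear_combination (norm := (ring_nf; reduce_mod_char!))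
    (b ^ 3 * x ^ 2 ^ k + b ^ 2 ^ k * b ^ 2 * x) * hc

variable [IsDomain R] {c : R}

theorem sq_add_self_add_one_eq_zero_iff (hc : c ^ 2 + c + 1 = 0) {y : R} :
    y ^ 2 + y + 1 = 0 ↔ y = c ∨ y = c + 1 := by
  rw [← sub_eq_zero (a := y) (b := c), ← sub_eq_zero (a := y), ← mul_eq_zero]
  constructor <;> intro h <;> linear_combination (norm := (ring_nf; reduce_mod_char!)) h + hc

theorem pow_four_eq_self_iff (hc : c ^ 2 + c + 1 = 0) {y : R} :
    y ^ 4 = y ↔ y = 0 ∨ y = 1 ∨ y = c ∨ y = c + 1 := by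
  rw [← sub_eq_zero, show y ^ 4 - y = y * ((y - 1) * (y ^ 2 + y + 1)) by ring, mul_eq_zero,
    mul_eq_zero, sub_eq_zero, sq_add_self_add_one_eq_zero_iff hc]

theorem pow_two_pow_eq_self_of_pow_four_eq_self (hc : c ^ 2 + c + 1 = 0) {k : ℕ}
    (hcq : c ^ 2 ^ k = c) {y : R} (hy : y ^ 4 = y) : y ^ 2 ^ k = y := by
  rcases (pow_four_eq_self_iff hc).1 hy with rfl | rfl | rfl | rfl
  · exact zero_pow (pow_ne_zero k two_ne_zero)
  · exact one_pow _
  · exact hcq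
  · rw [add_pow_char_pow, hcq, one_pow]

theorem pow_two_pow_succ_eq_self (hc : c ^ 2 + c + 1 = 0) {m : ℕ} (hm : c ^ 2 ^ m ≠ c) :
    c ^ 2 ^ (m + 1) = c := by
  have hroot : (c ^ 2 ^ m) ^ 2 + c ^ 2 ^ m + 1 = 0 := by
    rw [pow_right_comm, ← one_pow (M := R) (2 ^ m), ← add_pow_char_pow, ← add_pow_char_pow, hc,
      zero_pow (pow_ne_zero m two_ne_zero)]
  rw [pow_succ, pow_mul, ((sq_add_self_add_one_eq_zero_iff hc).1 hroot).resolve_left hm]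
  linear_combination hc

theorem card_filter_pow_four_eq_self [Fintype R] [DecidableEq R] (hc : c ^ 2 + c + 1 = 0) :
    #{y : R | y ^ 4 = y} = 4 := by
  have hc0 : c ≠ 0 := by rintro rfl; simp at hc
  have hc1 : c ≠ 1 := by
    rintro rfl
    norm_num at hc
    reduce_mod_char! at hc
    exact one_ne_zero hc
  have hc1' : c + 1 ≠ 0 := by rwa [Ne, CharTwo.add_eq_zero]
  have hroots : ({y : R | y ^ 4 = y} : Finset R) = {0, 1, c, c + 1} := by
    ext y
    simp [pow_four_eq_self_iff hc]
  rw [hroots, card_insert_of_notMem, card_insert_of_notMem, card_insert_of_notMem, card_singleton]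
  all_goals simp [hc0, hc0.symm, hc1.symm, hc1'.symm]

end CharTwo

theorem FiniteField.pow_four_eq_self_of_pow_two_pow_succ_eq_self {K : Type*} [Field K] [Fintype K]
    {m : ℕ} (hK : Fintype.card K = 2 ^ (2 * m)) {y : K} (hy : y ^ 2 ^ (m + 1) = y) : y ^ 4 = y :=
  calc y ^ 4 = y ^ (2 ^ (2 * m) * 4) := by rw [pow_mul, ← hK, FiniteField.pow_card]
    _ = (y ^ 2 ^ (m + 1)) ^ 2 ^ (m + 1) := by rw [← pow_mul]; ring_nf
    _ = y := by rw [hy, hy]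

theorem div_pow_two_pow_eq_div_iff {K : Type*} [Field K] [CharP K 2] {b : K} (hb : b ≠ 0) (k : ℕ)
    (x : K) : (x / b) ^ 2 ^ k = x / b ↔ b * x ^ 2 ^ k + b ^ 2 ^ k * x = 0 := by
  rw [div_pow, div_eq_div_iff (pow_ne_zero _ hb) hb, CharTwo.add_eq_zero, mul_comm b,
    mul_comm (b ^ _)]

theorem stmt_5_general (m n : ℕ) (hn : n = 2 * m)
    (F : Type) [Field F] [Fintype F] [DecidableEq F]
    (hcard : Fintype.card F = 2 ^ n)
    (a b : F) (hab : a * b * (a + b) ≠ 0)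
    (c : F) (hc : c = a / b) (hroot : c ^ 2 + c + 1 = 0) (hsub : c ^ 2 ^ m ≠ c) :
    (Finset.univ.filter (fun x : F =>
      (x + a + b) ^ (2 ^ (m + 1) + 3) + (x + b) ^ (2 ^ (m + 1) + 3) +
        (x + a) ^ (2 ^ (m + 1) + 3) + x ^ (2 ^ (m + 1) + 3) = 0)).card = 4 := by
  subst hn
  have : CharP F 2 := charP_of_card_eq_prime_pow hcard
  have hb : b ≠ 0 := right_ne_zero_of_mul (left_ne_zero_of_mul hab)
  obtain rfl : a = c * b := by rw [hc, div_mul_cancel₀ a hb]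
  have hcq := pow_two_pow_succ_eq_self hroot hsub
  rw [← card_filter_pow_four_eq_self hroot]
  refine card_equiv (Equiv.divRight₀ b hb) fun x => ?_
  have hfix : (x / b) ^ 2 ^ (m + 1) = x / b ↔ (x / b) ^ 4 = x / b :=
    ⟨FiniteField.pow_four_eq_self_of_pow_two_pow_succ_eq_self hcard,
      pow_two_pow_eq_self_of_pow_four_eq_self hroot hcq⟩
  simp only [mem_filter, mem_univ, true_and, Equiv.divRight₀_apply,
    secondDiff_pow_two_pow_add_three hroot hcq, mul_eq_zero, pow_eq_zero_iff two_ne_zero, hb,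
    false_or, ← div_pow_two_pow_eq_div_iff hb, hfix]

theorem stmt_5 (m n : ℕ) (hm : 1 ≤ m) (hn : n = 2 * m)
    (F : Type) [Field F] [Fintype F] [DecidableEq F]
    (hcard : Fintype.card F = 2 ^ n)
    (a b : F) (hab : a * b * (a + b) ≠ 0)
    (c : F) (hc : c = a / b) (hroot : c ^ 2 + c + 1 = 0) (hsub : c ^ 2 ^ m ≠ c) :
    (Finset.univ.filter (fun x : F =>
      (x + a + b) ^ (2 ^ (m + 1) + 3) + (x + b) ^ (2 ^ (m + 1) + 3) +
        (x + a) ^ (2 ^ (m + 1) + 3) + x ^ (2 ^ (m + 1) + 3) = 0)).card = 4 :=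
  stmt_5_general m n hn F hcard a b hab c hc hroot hsub
end

section
/- Let m ≥ 1, n = 2m, and let F(x) = x^{2^{m+1}+3} on F_{2^n}. Let a, b ∈ F_{2^n} with ab(a+b) ≠ 0, set c = a/b, and assume c^{2^m} ≠ c and c^2 + c + 1 ≠ 0. Put a_0 = ((c^{2^m}+c^2)/(c^{2^m}+c))^4 + (c^{2^{m+1}}+c)(c^4+c)/(c^{2^m}+c)^2, a_1 = c^2 + c, ω_1 = a_0/a_1^2, ω_2 = a_0 c^2/a_1^2, ω_3 = a_0 (c+1)^2/a_1^2, and assume a_0 ≠ 0. If Tr_1^n(ω_i) = 1 for some i ∈ {1,2,3}, then ∇_F(a,b) = 0. -/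
/-!
Write `a = c b` and `x = w b`. By homogeneity, `∇_F(a, b) = 0` at `x` becomes, in characteristic 2,
a relation of degree 2 between `w` and `W = w ^ 2 ^ m`. Since `y ↦ y ^ 2 ^ m` is an involutive field
automorphism of `F_{2^{2m}}`, the conjugate relation also holds, and eliminating `W` between the two
leaves the quartic `w⁴ + (c² + c + 1) w² + (c² + c) w + a₀ = 0`. Its resolvent cubic has the roots
`1, c, c + 1`, and each root `r` turns `w` into a solution of `y² + y = a₀ r² / (c² + c)² = ωᵢ`.
So a single zero of the second difference forces every `ωᵢ` to have absolute trace `0`.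
-/

open Finset

theorem sum_range_pow_sub_self_pow {R : Type*} [CommRing R] (p : ℕ) [ExpChar R p] (y : R) (n : ℕ) :
    ∑ i ∈ range n, (y ^ p - y) ^ p ^ i = y ^ p ^ n - y := by
  simp_rw [sub_pow_expChar_pow, ← pow_mul, ← pow_succ']
  simpa using sum_range_sub (fun i ↦ y ^ p ^ i) n

theorem FiniteField.sum_range_sq_add_self_pow_two_pow {K : Type*} [Field K] [Fintype K] {n : ℕ}
    (hcard : Fintype.card K = 2 ^ n) (y : K) : ∑ i ∈ range n, (y ^ 2 + y) ^ 2 ^ i = 0 := by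
  have : CharP K 2 := charP_of_card_eq_prime_pow hcard
  rw [← CharTwo.sub_eq_add, sum_range_pow_sub_self_pow, ← hcard, FiniteField.pow_card, sub_self]

def secondDiff {α : Type*} [Add α] (f : α → α) (a b x : α) : α :=
  f (x + a + b) + f (x + b) + f (x + a) + f x

section CommRing

variable {R : Type*} [CommRing R]

theorem secondDiff_pow_mul (d : ℕ) (a x t : R) :
    secondDiff (· ^ d) (a * t) t (x * t) = t ^ d * secondDiff (· ^ d) a 1 x := by
  simp only [secondDiff, ← add_one_mul, ← add_mul, mul_pow]
  ring

theorem map_secondDiff_pow {S : Type*} [CommRing S] (φ : R →+* S) (d : ℕ) (a b x : R) :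
    φ (secondDiff (· ^ d) a b x) = secondDiff (· ^ d) (φ a) (φ b) (φ x) := by
  simp [secondDiff]

/-- `secondDiff (· ^ (2 * q + 3)) c 1 w` in characteristic 2, with the Frobenius images `c ^ q` and
`w ^ q` replaced by independent variables `C` and `W`. -/
def diffForm (c C w W : R) : R :=
  (c ^ 2 + c) * W ^ 2 + (C ^ 2 + c) * w ^ 2 + (C + c) ^ 2 * w + (c ^ 2 + c + 1) * (C ^ 2 + c)

theorem secondDiff_pow_two_pow_succ_add_three [CharP R 2] (k : ℕ) (a x : R) :
    secondDiff (· ^ (2 ^ (k + 1) + 3)) a 1 x = diffForm a (a ^ 2 ^ k) x (x ^ 2 ^ k) := by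
  have hpow : ∀ y : R, y ^ (2 ^ (k + 1) + 3) = (y ^ 2 ^ k) ^ 2 * y ^ 3 := fun y ↦ by
    rw [pow_add, pow_succ, pow_mul]
  simp only [secondDiff, diffForm, hpow, add_pow_char_pow, one_pow]
  linear_combination (norm := ring_nf)
  reduce_mod_char!

end CommRing

section Field

variable {K : Type*} [Field K] [CharP K 2]

theorem diffForm_quartic {c C w W : K} (hcC : C + c ≠ 0) (h₁ : diffForm c C w W = 0)
    (h₂ : diffForm C c W w = 0) :
    (C + c) ^ 4 * (w ^ 4 + (c ^ 2 + c + 1) * w ^ 2 + (c ^ 2 + c) * w)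
      + (C + c ^ 2) ^ 4 + (C ^ 2 + c) * (c ^ 4 + c) * (C + c) ^ 2 = 0 := by
  unfold diffForm at h₁ h₂
  have hlin : (C + c) ^ 2 * w ^ 2 + (c ^ 2 + C) * (C + c) * w + (c ^ 2 + c) * (C + c) * W
      + (C + c ^ 2) ^ 2 = 0 := by
    refine (mul_eq_zero.mp ?_).resolve_left hcC
    linear_combination (norm := ring_nf) (c ^ 2 + C) * h₁ + (c ^ 2 + c) * h₂
    reduce_mod_char!
  linear_combination (norm := ring_nf) (c ^ 2 + c) * (C + c) ^ 2 * h₁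
    + ((C + c) ^ 2 * w ^ 2 + (c ^ 2 + C) * (C + c) * w + (c ^ 2 + c) * (C + c) * W
      + (C + c ^ 2) ^ 2) * hlin
  reduce_mod_char!

theorem exists_sq_add_self_eq_of_quartic_of_cubic {e s t w r : K} (hs : s ≠ 0)
    (hw : w ^ 4 + e * w ^ 2 + s * w + t = 0) (hr : r ^ 3 + e * r + s = 0) :
    ∃ y, y ^ 2 + y = t * (r / s) ^ 2 := by
  refine ⟨r * (w ^ 2 + r * w) / s, ?_⟩
  field_simp
  linear_combination (norm := ring_nf) r ^ 2 * hw + r * w ^ 2 * hr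
  reduce_mod_char!

end Field

theorem FiniteField.quartic_of_secondDiff_eq_zero {K : Type*} [Field K] [Fintype K] {m : ℕ}
    (hcard : Fintype.card K = 2 ^ (2 * m)) {c w : K} (hcC : c ^ 2 ^ m + c ≠ 0)
    (h : secondDiff (· ^ (2 ^ (m + 1) + 3)) c 1 w = 0) :
    (c ^ 2 ^ m + c) ^ 4 * (w ^ 4 + (c ^ 2 + c + 1) * w ^ 2 + (c ^ 2 + c) * w)
      + (c ^ 2 ^ m + c ^ 2) ^ 4 + ((c ^ 2 ^ m) ^ 2 + c) * (c ^ 4 + c) * (c ^ 2 ^ m + c) ^ 2 = 0 := by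
  have : CharP K 2 := charP_of_card_eq_prime_pow hcard
  have hfrob : ∀ y : K, (y ^ 2 ^ m) ^ 2 ^ m = y := fun y ↦ by
    rw [← pow_mul, ← pow_add, ← two_mul, ← hcard, FiniteField.pow_card]
  have hconj := congrArg (iterateFrobenius K 2 m) h
  rw [map_secondDiff_pow, map_one, map_zero, iterateFrobenius_def, iterateFrobenius_def,
    secondDiff_pow_two_pow_succ_add_three, hfrob, hfrob] at hconj
  rw [secondDiff_pow_two_pow_succ_add_three] at h
  exact diffForm_quartic hcC h hconj

theorem stmt_7_general (m n : ℕ) (hn : n = 2 * m)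
    (F : Type) [Field F] [Fintype F] [DecidableEq F]
    (hcard : Fintype.card F = 2 ^ n)
    (a b : F) (hab : a * b * (a + b) ≠ 0)
    (c : F) (hc : c = a / b) (hsub : c ^ 2 ^ m ≠ c)
    (a₀ a₁ ω₁ ω₂ ω₃ : F)
    (ha₀ : a₀ = ((c ^ 2 ^ m + c ^ 2) / (c ^ 2 ^ m + c)) ^ 4 +
      (c ^ 2 ^ (m + 1) + c) * (c ^ 4 + c) / (c ^ 2 ^ m + c) ^ 2)
    (ha₁ : a₁ = c ^ 2 + c)
    (hω₁ : ω₁ = a₀ / a₁ ^ 2) (hω₂ : ω₂ = a₀ * c ^ 2 / a₁ ^ 2)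
    (hω₃ : ω₃ = a₀ * (c + 1) ^ 2 / a₁ ^ 2)
    (htr : (∑ i ∈ Finset.range n, ω₁ ^ 2 ^ i = 1) ∨
           (∑ i ∈ Finset.range n, ω₂ ^ 2 ^ i = 1) ∨
           (∑ i ∈ Finset.range n, ω₃ ^ 2 ^ i = 1)) :
    (Finset.univ.filter (fun x : F =>
      (x + a + b) ^ (2 ^ (m + 1) + 3) + (x + b) ^ (2 ^ (m + 1) + 3) +
        (x + a) ^ (2 ^ (m + 1) + 3) + x ^ (2 ^ (m + 1) + 3) = 0)).card = 0 := by
  have : CharP F 2 := charP_of_card_eq_prime_pow hcard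
  have hb : b ≠ 0 := right_ne_zero_of_mul (left_ne_zero_of_mul hab)
  have hcC : c ^ 2 ^ m + c ≠ 0 := fun h ↦ hsub (CharTwo.add_eq_zero.mp h)
  have hs : c ^ 2 + c ≠ 0 := by
    rw [show c ^ 2 + c = a * b * (a + b) / b ^ 3 by rw [hc]; field_simp]
    exact div_ne_zero hab (pow_ne_zero 3 hb)
  rw [card_eq_zero, filter_eq_empty_iff]
  intro x _ hx
  obtain ⟨w, rfl⟩ : ∃ w, x = w * b := ⟨x / b, (div_mul_cancel₀ x hb).symm⟩
  have hw : secondDiff (· ^ (2 ^ (m + 1) + 3)) c 1 w = 0 := by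
    change secondDiff (· ^ (2 ^ (m + 1) + 3)) a b (w * b) = 0 at hx
    rw [← div_mul_cancel₀ a hb, ← hc, secondDiff_pow_mul] at hx
    exact (mul_eq_zero.mp hx).resolve_left (pow_ne_zero _ hb)
  have hquartic : w ^ 4 + (c ^ 2 + c + 1) * w ^ 2 + (c ^ 2 + c) * w + a₀ = 0 := by
    refine (mul_eq_zero.mp ?_).resolve_left (pow_ne_zero 4 hcC)
    have ha₀' : a₀ * (c ^ 2 ^ m + c) ^ 4 = (c ^ 2 ^ m + c ^ 2) ^ 4
        + ((c ^ 2 ^ m) ^ 2 + c) * (c ^ 4 + c) * (c ^ 2 ^ m + c) ^ 2 := by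
      rw [ha₀, pow_succ 2 m, pow_mul]
      field_simp
    linear_combination FiniteField.quartic_of_secondDiff_eq_zero (hn ▸ hcard) hcC hw + ha₀'
  have htrace : ∀ r ω, r ^ 3 + (c ^ 2 + c + 1) * r + (c ^ 2 + c) = 0 →
      ω = a₀ * (r / a₁) ^ 2 → ∑ i ∈ range n, ω ^ 2 ^ i ≠ 1 := by
    rintro r ω hr rfl
    obtain ⟨y, hy⟩ := exists_sq_add_self_eq_of_quartic_of_cubic hs hquartic hr
    rw [ha₁, ← hy, FiniteField.sum_range_sq_add_self_pow_two_pow hcard]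
    exact zero_ne_one
  rcases htr with h | h | h
  · exact htrace 1 ω₁ (by ring_nf; reduce_mod_char!) (by rw [hω₁]; ring) h
  · exact htrace c ω₂ (by ring_nf; reduce_mod_char!) (by rw [hω₂]; ring) h
  · exact htrace (c + 1) ω₃ (by ring_nf; reduce_mod_char!) (by rw [hω₃]; ring) h

theorem stmt_7 (m n : ℕ) (hm : 1 ≤ m) (hn : n = 2 * m)
    (F : Type) [Field F] [Fintype F] [DecidableEq F]
    (hcard : Fintype.card F = 2 ^ n)
    (a b : F) (hab : a * b * (a + b) ≠ 0)
    (c : F) (hc : c = a / b) (hsub : c ^ 2 ^ m ≠ c) (hroot : c ^ 2 + c + 1 ≠ 0)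
    (a₀ a₁ ω₁ ω₂ ω₃ : F)
    (ha₀ : a₀ = ((c ^ 2 ^ m + c ^ 2) / (c ^ 2 ^ m + c)) ^ 4 +
      (c ^ 2 ^ (m + 1) + c) * (c ^ 4 + c) / (c ^ 2 ^ m + c) ^ 2)
    (ha₁ : a₁ = c ^ 2 + c)
    (hω₁ : ω₁ = a₀ / a₁ ^ 2) (hω₂ : ω₂ = a₀ * c ^ 2 / a₁ ^ 2)
    (hω₃ : ω₃ = a₀ * (c + 1) ^ 2 / a₁ ^ 2)
    (ha₀ne : a₀ ≠ 0)
    (htr : (∑ i ∈ Finset.range n, ω₁ ^ 2 ^ i = 1) ∨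
           (∑ i ∈ Finset.range n, ω₂ ^ 2 ^ i = 1) ∨
           (∑ i ∈ Finset.range n, ω₃ ^ 2 ^ i = 1)) :
    (Finset.univ.filter (fun x : F =>
      (x + a + b) ^ (2 ^ (m + 1) + 3) + (x + b) ^ (2 ^ (m + 1) + 3) +
        (x + a) ^ (2 ^ (m + 1) + 3) + x ^ (2 ^ (m + 1) + 3) = 0)).card = 0 :=
  stmt_7_general m n hn F hcard a b hab c hc hsub a₀ a₁ ω₁ ω₂ ω₃ ha₀ ha₁ hω₁ hω₂ hω₃ htr
end

section
/- Let p be an odd prime with p ≠ 5, n a positive integer, and let F(x) = x^5 on F_{p^n}. For all a, b ∈ F_{p^n} with ab ≠ 0, if η(−(a^2+b^2)) = −1 (i.e. −(a^2+b^2) is a nonsquare in F_{p^n}), then ∇_F(a,b) = 1. -/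
/-!
Twice the second difference of `x ↦ x ^ 5` factors as `5ab · y · (y ^ 2 + a ^ 2 + b ^ 2)` with
`y = 2x + a + b`. The last factor has no root when `-(a ^ 2 + b ^ 2)` is a nonsquare, so in odd
characteristic different from 5 the only zero is `y = 0`, i.e. `x = -(a + b) / 2`.
-/

lemma two_mul_second_diff_pow_five {R : Type*} [CommRing R] (a b x : R) :
    2 * ((x + a + b) ^ 5 - (x + b) ^ 5 - (x + a) ^ 5 + x ^ 5) =
      5 * (a * b) * (2 * x + a + b) * ((2 * x + a + b) ^ 2 + (a ^ 2 + b ^ 2)) := by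
  ring

lemma second_diff_pow_five_eq_zero_iff {K : Type*} [Field K] (h2 : (2 : K) ≠ 0)
    (h5 : (5 : K) ≠ 0) {a b : K} (hab : a * b ≠ 0) (hns : ¬ IsSquare (-(a ^ 2 + b ^ 2)))
    (x : K) :
    (x + a + b) ^ 5 - (x + b) ^ 5 - (x + a) ^ 5 + x ^ 5 = 0 ↔ x = -(a + b) / 2 := by
  have hquad : (2 * x + a + b) ^ 2 + (a ^ 2 + b ^ 2) ≠ 0 := fun h ↦
    hns ⟨2 * x + a + b, by linear_combination -h⟩
  have hx : x = -(a + b) / 2 ↔ 2 * x + a + b = 0 := by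
    rw [eq_div_iff h2]
    constructor <;> intro h <;> linear_combination h
  rw [hx, ← mul_right_inj' h2, two_mul_second_diff_pow_five, mul_zero]
  simp [h5, hab, hquad]

theorem stmt_12_general (p n : ℕ) (hp : p.Prime) (hodd : p ≠ 2) (hp5 : p ≠ 5)
    (F : Type) [Field F] [Fintype F] [DecidableEq F]
    (hcard : Fintype.card F = p ^ n)
    (a b : F) (hab : a * b ≠ 0)
    (hns : ¬ IsSquare (-(a ^ 2 + b ^ 2))) :
    (Finset.univ.filter (fun x : F =>
      (x + a + b) ^ 5 - (x + b) ^ 5 - (x + a) ^ 5 + x ^ 5 = 0)).card = 1 := by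
  have := Fact.mk hp
  have := charP_of_card_eq_prime_pow hcard
  have h2 : ((2 : ℕ) : F) ≠ 0 := CharP.cast_ne_zero_of_ne_of_prime F Nat.prime_two hodd
  have h5 : ((5 : ℕ) : F) ≠ 0 := CharP.cast_ne_zero_of_ne_of_prime F (by norm_num) hp5
  push_cast at h2 h5
  rw [Finset.card_eq_one]
  refine ⟨-(a + b) / 2, Finset.ext fun x ↦ ?_⟩
  simp [second_diff_pow_five_eq_zero_iff h2 h5 hab hns]

theorem stmt_12 (p n : ℕ) (hp : p.Prime) (hodd : p ≠ 2) (hp5 : p ≠ 5) (hn : 0 < n)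
    (F : Type) [Field F] [Fintype F] [DecidableEq F]
    (hcard : Fintype.card F = p ^ n)
    (a b : F) (hab : a * b ≠ 0)
    (hns : ¬ IsSquare (-(a ^ 2 + b ^ 2))) :
    (Finset.univ.filter (fun x : F =>
      (x + a + b) ^ 5 - (x + b) ^ 5 - (x + a) ^ 5 + x ^ 5 = 0)).card = 1 :=
  stmt_12_general p n hp hodd hp5 F hcard a b hab hns
end

section
/- Let p be an odd prime with p ≠ 5 and n a positive integer. Then F(x) = x^5 on F_{p^n} is second-order zero differential 3-uniform, i.e. max{∇_F(a,b) : a, b ∈ F_{p^n}\{0}} = 3. -/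
/-!
Writing `y = 2x + a + b`, the second-order difference of `x ↦ x⁵` factors as
`2 Δ(x) = 5ab · y (y² + a² + b²)`, so for `a, b ≠ 0` its zeros correspond bijectively to the
roots of the cubic `y (y² + a² + b²)`: there are at most three, and exactly three when
`-(a² + b²) = c²` for some `c ≠ 0`. Such `a, b, c` exist in every finite field of odd
characteristic other than `𝔽₅`: write `-1 = u² + v²`; if `u, v ≠ 0` take `c = 1`, and
otherwise `-1 = i²` and the Pythagorean triple `(1 - t², 2t, 1 + t²)` gives
`(1 - t², 2t, i (1 + t²))` for any `t ∉ {0, ±1, ±i}`.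
-/

open Finset Polynomial

variable {F : Type*} [Field F]

/-- The set whose cardinality is `∇_f(a, b)`. -/
def secondDiffZeros [Fintype F] [DecidableEq F] (f : F → F) (a b : F) : Finset F :=
  {x | f (x + a + b) - f (x + b) - f (x + a) + f x = 0}

lemma two_mul_secondDiff_pow_five (a b x : F) :
    2 * ((x + a + b) ^ 5 - (x + b) ^ 5 - (x + a) ^ 5 + x ^ 5) =
      5 * a * b * ((2 * x + a + b) * ((2 * x + a + b) ^ 2 + (a ^ 2 + b ^ 2))) := by
  ring

lemma card_secondDiffZeros_pow_five [Fintype F] [DecidableEq F] {a b : F} (h2 : (2 : F) ≠ 0)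
    (h5 : (5 : F) ≠ 0) (ha : a ≠ 0) (hb : b ≠ 0) :
    #(secondDiffZeros (· ^ 5) a b) = #{y : F | y * (y ^ 2 + (a ^ 2 + b ^ 2)) = 0} := by
  refine card_equiv ((Equiv.mulLeft₀ 2 h2).trans (Equiv.addRight (a + b))) fun x => ?_
  have h5ab : 5 * a * b ≠ 0 := mul_ne_zero (mul_ne_zero h5 ha) hb
  simp only [secondDiffZeros, mem_filter, mem_univ, true_and, Equiv.trans_apply,
    Equiv.mulLeft₀_apply, Equiv.coe_addRight]
  rw [← mul_right_inj' h2, mul_zero, two_mul_secondDiff_pow_five, mul_eq_zero,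
    or_iff_right h5ab, add_assoc (2 * x)]

lemma card_filter_mul_sq_add_le_three [Fintype F] [DecidableEq F] (s : F) :
    #{y : F | y * (y ^ 2 + s) = 0} ≤ 3 := by
  have hdeg : (X * (X ^ 2 + C s)).natDegree = 3 := by compute_degree!
  have hne : X * (X ^ 2 + C s) ≠ 0 := ne_zero_of_natDegree_gt (n := 0) (by omega)
  refine hdeg ▸ card_le_degree_of_subset_roots fun y hy => ?_
  rw [mem_roots hne]
  simpa using (mem_filter.mp hy).2

lemma card_filter_mul_sq_add_eq_three [Fintype F] [DecidableEq F] {s c : F} (h2 : (2 : F) ≠ 0)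
    (hc : c ≠ 0) (hs : s + c ^ 2 = 0) :
    #{y : F | y * (y ^ 2 + s) = 0} = 3 := by
  have hroots : ({y : F | y * (y ^ 2 + s) = 0} : Finset F) = {0, c, -c} := by
    ext y
    have hfactor : y * (y ^ 2 + s) = y * ((y - c) * (y + c)) := by linear_combination y * hs
    simp only [mem_filter, mem_univ, true_and, mem_insert, mem_singleton]
    rw [hfactor]
    simp only [mul_eq_zero, sub_eq_zero, add_eq_zero_iff_eq_neg]
  have hc2 : c ≠ -c := fun h =>
    hc <| (mul_eq_zero.mp (by linear_combination h : 2 * c = 0)).resolve_left h2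
  rw [hroots, card_eq_three]
  exact ⟨0, c, -c, hc.symm, (neg_ne_zero.mpr hc).symm, hc2, rfl⟩

lemma FiniteField.exists_sq_add_sq_add_sq_eq_zero_of_sq_eq_neg_one [Fintype F]
    (hF : ringChar F ≠ 2) (h5 : Fintype.card F ≠ 5) {i : F} (hi : i ^ 2 = -1) :
    ∃ a b c : F, a ≠ 0 ∧ b ≠ 0 ∧ c ≠ 0 ∧ a ^ 2 + b ^ 2 + c ^ 2 = 0 := by
  classical
  have hcard : 5 < Fintype.card F := by
    have hmod4 := FiniteField.isSquare_neg_one_iff.mp ⟨i, by rw [← hi, sq]⟩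
    have hodd := FiniteField.odd_card_of_char_ne_two hF
    have := Fintype.one_lt_card (α := F)
    omega
  obtain ⟨t, -, ht⟩ := exists_mem_notMem_of_card_lt_card
    ((card_le_five (a := (0 : F)) (b := 1) (c := -1) (d := i) (e := -i)).trans_lt hcard)
  simp only [mem_insert, mem_singleton, not_or] at ht
  obtain ⟨ht0, ht1, htm1, hti, htmi⟩ := ht
  have hsub : 1 - t ^ 2 = (1 - t) * (1 + t) := by ring
  have hadd : 1 + t ^ 2 = (t - i) * (t + i) := by linear_combination hi
  refine ⟨1 - t ^ 2, 2 * t, i * (1 + t ^ 2), ?_, mul_ne_zero (Ring.two_ne_zero hF) ht0, ?_, ?_⟩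
  · rw [hsub]
    exact mul_ne_zero (sub_ne_zero.mpr (Ne.symm ht1)) fun h => htm1 (by linear_combination h)
  · have hi0 : i ≠ 0 := by rintro rfl; simp at hi
    rw [hadd]
    exact mul_ne_zero hi0 <|
      mul_ne_zero (sub_ne_zero.mpr hti) fun h => htmi (by linear_combination h)
  · linear_combination (1 + t ^ 2) ^ 2 * hi

lemma FiniteField.exists_sq_add_sq_add_sq_eq_zero [Fintype F] (hF : ringChar F ≠ 2)
    (h5 : Fintype.card F ≠ 5) :
    ∃ a b c : F, a ≠ 0 ∧ b ≠ 0 ∧ c ≠ 0 ∧ a ^ 2 + b ^ 2 + c ^ 2 = 0 := by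
  obtain ⟨u, v, huv⟩ := FiniteField.exists_root_sum_quadratic (degree_X_pow 2)
    (degree_X_pow_add_C two_pos (1 : F)) (FiniteField.odd_card_of_char_ne_two hF)
  simp only [eval_add, eval_pow, eval_X, eval_C] at huv
  by_cases hu : u = 0
  · exact FiniteField.exists_sq_add_sq_add_sq_eq_zero_of_sq_eq_neg_one hF h5 (i := v)
      (by subst hu; linear_combination huv)
  by_cases hv : v = 0
  · exact FiniteField.exists_sq_add_sq_add_sq_eq_zero_of_sq_eq_neg_one hF h5 (i := u)
      (by subst hv; linear_combination huv)
  exact ⟨u, v, 1, hu, hv, one_ne_zero, by linear_combination huv⟩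

theorem stmt_14 (p n : ℕ) (hp : p.Prime) (hodd : p ≠ 2) (hp5 : p ≠ 5) (hn : 0 < n)
    (F : Type) [Field F] [Fintype F] [DecidableEq F]
    (hcard : Fintype.card F = p ^ n) :
    IsGreatest {k : ℕ | ∃ a b : F, a ≠ 0 ∧ b ≠ 0 ∧
      (Finset.univ.filter (fun x : F =>
        (x + a + b) ^ 5 - (x + b) ^ 5 - (x + a) ^ 5 + x ^ 5 = 0)).card = k} 3 := by
  have hchar : ringChar F = p := by
    refine CharP.ringChar_of_prime_eq_zero hp ((pow_eq_zero_iff hn.ne').mp ?_)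
    exact_mod_cast hcard ▸ FiniteField.cast_card_eq_zero F
  have hp_not_dvd_five : ¬p ∣ 5 := fun h =>
    hp5 ((Nat.prime_dvd_prime_iff_eq hp (by norm_num)).mp h)
  have h2 : (2 : F) ≠ 0 := Ring.two_ne_zero (hchar ▸ hodd)
  have h5 : (5 : F) ≠ 0 := by
    rw [Ne, ← Nat.cast_ofNat, ringChar.spec, hchar]
    exact hp_not_dvd_five
  have hcard5 : Fintype.card F ≠ 5 := fun h =>
    hp_not_dvd_five (h ▸ hcard ▸ dvd_pow_self p hn.ne')
  refine ⟨?_, ?_⟩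
  · obtain ⟨a, b, c, ha, hb, hc, habc⟩ :=
      FiniteField.exists_sq_add_sq_add_sq_eq_zero (hchar ▸ hodd) hcard5
    exact ⟨a, b, ha, hb, (card_secondDiffZeros_pow_five h2 h5 ha hb).trans
      (card_filter_mul_sq_add_eq_three h2 hc habc)⟩
  · rintro k ⟨a, b, ha, hb, rfl⟩
    exact (card_secondDiffZeros_pow_five h2 h5 ha hb).trans_le (card_filter_mul_sq_add_le_three _)
end

section
/- Let p be a prime with p ≥ 5 and p ≠ 7, n a positive integer, and let F(x) = x^7 on F_{p^n}. For all a, b ∈ F_{p^n} with ab ≠ 0, ∇_F(a,b) ≤ 5; consequently the second-order zero differential uniformity of F is at most 5. -/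
/-!
The second-order difference `(x + a + b)^m - (x + b)^m - (x + a)^m + x^m` is a polynomial in `x`
of degree at most `m - 2` whose coefficient of `x^(m-2)` is `m (m - 1) a b`. For `m = 7` this is
`42 a b`, which is nonzero when `ab ≠ 0` and the characteristic `p` does not divide `42 = 2·3·7`;
a nonzero quintic has at most five roots.
-/

open Polynomial

section SecondDifference

variable {R : Type*} [CommRing R]

noncomputable def secondDiffPow (m : ℕ) (a b : R) : R[X] :=
  (X + C (a + b)) ^ m - (X + C b) ^ m - (X + C a) ^ m + X ^ m

theorem eval_secondDiffPow (m : ℕ) (a b x : R) :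
    (secondDiffPow m a b).eval x = (x + a + b) ^ m - (x + b) ^ m - (x + a) ^ m + x ^ m := by
  simp only [secondDiffPow, eval_add, eval_sub, eval_pow, eval_X, eval_C, add_assoc]

-- The `0 ^ (m - k)` term is the coefficient of `X ^ m`, read as `(X + C 0) ^ m`.
theorem coeff_secondDiffPow (m : ℕ) (a b : R) (k : ℕ) :
    (secondDiffPow m a b).coeff k =
      ((a + b) ^ (m - k) - b ^ (m - k) - a ^ (m - k) + 0 ^ (m - k)) * (m.choose k : R) := by
  have hX : (X : R[X]) ^ m = (X + C 0) ^ m := by rw [C_0, add_zero]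
  rw [secondDiffPow, hX]
  simp only [coeff_add, coeff_sub, coeff_X_add_C_pow]
  ring

theorem natDegree_secondDiffPow_le (n : ℕ) (a b : R) :
    (secondDiffPow (n + 2) a b).natDegree ≤ n := by
  refine natDegree_le_iff_coeff_eq_zero.mpr fun k hk => ?_
  rw [coeff_secondDiffPow]
  rcases (by omega : n + 2 - k = 0 ∨ n + 2 - k = 1) with h | h <;> rw [h] <;> ring

theorem coeff_secondDiffPow_self (n : ℕ) (a b : R) :
    (secondDiffPow (n + 2) a b).coeff n = (n + 2) * (n + 1) * a * b := by
  have hchoose : (n + 2).choose n * 2 = (n + 2) * (n + 1) := by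
    rw [Nat.choose_symm_add, ← Nat.add_one_mul_choose_eq, Nat.choose_one_right]
  have hchoose' : ((n + 2).choose n : R) * 2 = (n + 2) * (n + 1) := by
    simpa using congrArg (Nat.cast : ℕ → R) hchoose
  rw [coeff_secondDiffPow, Nat.add_sub_cancel_left]
  linear_combination (a * b) * hchoose'

end SecondDifference

theorem Polynomial.card_filter_eval_eq_zero_le_natDegree {K : Type*} [Field K] [Fintype K]
    [DecidableEq K] {f : K[X]} (hf : f ≠ 0) : (Finset.univ.filter (fun x => f.eval x = 0)).card ≤ f.natDegree :=
  card_le_degree_of_subset_roots fun x hx => by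
    simpa [mem_roots hf] using (Finset.mem_filter.mp hx).2

theorem forty_two_ne_zero {R : Type*} [AddMonoidWithOne R] (p : ℕ) [CharP R p] (hp : p.Prime)
    (hp5 : 5 ≤ p) (hp7 : p ≠ 7) : (42 : R) ≠ 0 := by
  have hndvd : ¬ p ∣ 42 := fun h => by
    have : p ≤ 42 := Nat.le_of_dvd (by norm_num) h
    interval_cases p <;> first | omega | norm_num at hp
  exact_mod_cast (CharP.cast_eq_zero_iff R p 42).not.mpr hndvd

theorem stmt_15_general (p n : ℕ) (hp : p.Prime) (hp5 : 5 ≤ p) (hp7 : p ≠ 7)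
    (F : Type) [Field F] [Fintype F] [DecidableEq F]
    (hcard : Fintype.card F = p ^ n) :
    ∀ a b : F, a * b ≠ 0 →
      (Finset.univ.filter (fun x : F =>
        (x + a + b) ^ 7 - (x + b) ^ 7 - (x + a) ^ 7 + x ^ 7 = 0)).card ≤ 5 := by
  intro a b hab
  have : Fact p.Prime := ⟨hp⟩
  have : CharP F p := charP_of_card_eq_prime_pow hcard
  have hlead : (secondDiffPow 7 a b).coeff 5 ≠ 0 := by
    have h42 : ((5 : ℕ) + 2) * ((5 : ℕ) + 1) = (42 : F) := by norm_num
    rw [coeff_secondDiffPow_self 5 a b, h42, mul_assoc]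
    exact mul_ne_zero (forty_two_ne_zero p hp hp5 hp7) hab
  have hne : secondDiffPow 7 a b ≠ 0 := fun h => hlead (by rw [h, coeff_zero])
  simpa only [eval_secondDiffPow] using
    (card_filter_eval_eq_zero_le_natDegree hne).trans (natDegree_secondDiffPow_le 5 a b)

theorem stmt_15 (p n : ℕ) (hp : p.Prime) (hp5 : 5 ≤ p) (hp7 : p ≠ 7) (hn : 0 < n)
    (F : Type) [Field F] [Fintype F] [DecidableEq F]
    (hcard : Fintype.card F = p ^ n) :
    ∀ a b : F, a * b ≠ 0 →
      (Finset.univ.filter (fun x : F =>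
        (x + a + b) ^ 7 - (x + b) ^ 7 - (x + a) ^ 7 + x ^ 7 = 0)).card ≤ 5 :=
  stmt_15_general p n hp hp5 hp7 F hcard
end

section
/- Let n be an odd positive integer and let F(x) = x^7 on F_{3^n}. For all a, b ∈ F_{3^n} with ab ≠ 0 (note a^2+b^2 ≠ 0 automatically since −1 is a nonsquare in F_{3^n} for n odd): if η(a^2+b^2) = 1 then ∇_F(a,b) = 1, and if η(a^2+b^2) = −1 then ∇_F(a,b) = 3. -/
/-!
In characteristic 3 the second difference of `x ↦ x ^ 7` factors as
`-a b y ((a² + b²) y² + a² b²)` with `y = x - (a + b)`. Besides `y = 0` it has the roots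
`y = ± d` where `(a² + b²) d² = -a² b²`, which exist iff `-(a² + b²)` is a square. As `-1` is
a nonsquare in `𝔽_{3^n}` for odd `n`, this happens exactly when `a² + b²` is a nonsquare.
-/

open Finset

theorem secondDiff_pow_seven_of_three_eq_zero {R : Type*} [CommRing R] (h3 : (3 : R) = 0)
    (a b x : R) :
    (x + a + b) ^ 7 - (x + b) ^ 7 - (x + a) ^ 7 + x ^ 7 =
      -(a * b * ((x - (a + b)) * ((a ^ 2 + b ^ 2) * (x - (a + b)) ^ 2 + (a * b) ^ 2))) := by
  linear_combination (14*x^5*a*b + 35*x^4*a*b^2 + 35*x^4*a^2*b + 47*x^3*a*b^3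
    + 70*x^3*a^2*b^2 + 47*x^3*a^3*b + 34*x^2*a*b^4 + 69*x^2*a^2*b^3 + 69*x^2*a^3*b^2
    + 34*x^2*a^4*b + 15*x*a*b^5 + 37*x*a^2*b^4 + 49*x*a^3*b^3 + 37*x*a^4*b^2 + 15*x*a^5*b
    + 2*a*b^6 + 6*a^2*b^5 + 10*a^3*b^4 + 10*a^4*b^3 + 6*a^5*b^2 + 2*a^6*b) * h3

theorem three_pow_mod_four_of_odd {n : ℕ} (hn : Odd n) : 3 ^ n % 4 = 3 := by
  obtain ⟨k, rfl⟩ := hn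
  rw [pow_succ, pow_mul, Nat.mul_mod, Nat.pow_mod]
  norm_num

theorem isSquare_mul_sq_iff {K : Type*} [Field K] {u c : K} (hc : c ≠ 0) :
    IsSquare (u * c ^ 2) ↔ IsSquare u := by
  refine ⟨fun h => ?_, fun h => h.mul (IsSquare.sq c)⟩
  simpa [hc] using h.div (IsSquare.sq c)

theorem FiniteField.isSquare_neg_iff_not_isSquare {F : Type*} [Field F] [Fintype F]
    [DecidableEq F] (hm1 : ¬IsSquare (-1 : F)) {u : F} (hu : u ≠ 0) :
    IsSquare (-u) ↔ ¬IsSquare u := by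
  have hχ : quadraticChar F (-u) = -quadraticChar F u := by
    rw [neg_eq_neg_one_mul u, map_mul, quadraticChar_neg_one_iff_not_isSquare.mpr hm1,
      neg_one_mul]
  rw [← quadraticChar_one_iff_isSquare (neg_ne_zero.mpr hu), hχ, neg_eq_iff_eq_neg,
    quadraticChar_neg_one_iff_not_isSquare]

section CubicRoots

variable {F : Type*} [Field F] [Fintype F] [DecidableEq F] {s t : F}

theorem filter_cubic_eq_zero_eq_singleton (c : F) (h : ¬IsSquare (-(s * t))) :
    univ.filter (fun x => (x - c) * (s * (x - c) ^ 2 + t) = 0) = {c} := by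
  ext x
  simp only [mem_filter, mem_univ, true_and, mem_singleton, mul_eq_zero, sub_eq_zero,
    or_iff_left_iff_imp]
  intro hq
  -- a root `x ≠ c` would give `(s (x - c))² = -(s t)`
  exact absurd ⟨s * (x - c), by linear_combination -s * hq⟩ h

theorem filter_cubic_eq_zero_eq_triple (c : F) {d : F} (hs : s ≠ 0)
    (hd : s * d ^ 2 + t = 0) :
    univ.filter (fun x => (x - c) * (s * (x - c) ^ 2 + t) = 0) = {c, c + d, c - d} := by
  ext x
  have hq : s * (x - c) ^ 2 + t = s * ((x - c) ^ 2 - d ^ 2) := by linear_combination hd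
  simp only [mem_filter, mem_univ, true_and, mem_insert, mem_singleton, hq, mul_eq_zero, hs,
    false_or, sub_eq_zero, sq_eq_sq_iff_eq_or_eq_neg]
  rw [sub_eq_iff_eq_add', sub_eq_iff_eq_add', ← sub_eq_add_neg]

theorem card_filter_cubic_eq_zero_of_not_isSquare (c : F) (h : ¬IsSquare (-(s * t))) :
    (univ.filter (fun x => (x - c) * (s * (x - c) ^ 2 + t) = 0)).card = 1 := by
  rw [filter_cubic_eq_zero_eq_singleton c h, card_singleton]

theorem card_filter_cubic_eq_zero_of_isSquare (c : F) (h2 : (2 : F) ≠ 0) (hs : s ≠ 0)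
    (ht : t ≠ 0) (h : IsSquare (-(s * t))) :
    (univ.filter (fun x => (x - c) * (s * (x - c) ^ 2 + t) = 0)).card = 3 := by
  obtain ⟨r, hr⟩ := h
  have hr0 : r ≠ 0 := by
    rintro rfl
    exact mul_ne_zero hs ht (neg_eq_zero.mp (by simpa using hr))
  have hd : s * (r / s) ^ 2 + t = 0 := by
    field_simp
    linear_combination -hr
  have hd0 : r / s ≠ 0 := div_ne_zero hr0 hs
  rw [filter_cubic_eq_zero_eq_triple c hs hd, card_eq_three]
  refine ⟨c, c + r / s, c - r / s, ?_, ?_, ?_, rfl⟩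
  · simpa using hd0
  · simpa [sub_eq_add_neg] using hd0
  · intro heq
    exact mul_ne_zero h2 hd0 (by linear_combination heq)

end CubicRoots

theorem stmt_16_general (n : ℕ) (hodd : Odd n)
    (F : Type) [Field F] [Fintype F] [DecidableEq F]
    (hcard : Fintype.card F = 3 ^ n)
    (a b : F) (hab : a * b ≠ 0) :
    ((a ^ 2 + b ^ 2 ≠ 0 ∧ IsSquare (a ^ 2 + b ^ 2) →
      (Finset.univ.filter (fun x : F =>
        (x + a + b) ^ 7 - (x + b) ^ 7 - (x + a) ^ 7 + x ^ 7 = 0)).card = 1) ∧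
     (¬ IsSquare (a ^ 2 + b ^ 2) →
      (Finset.univ.filter (fun x : F =>
        (x + a + b) ^ 7 - (x + b) ^ 7 - (x + a) ^ 7 + x ^ 7 = 0)).card = 3)) := by
  have : CharP F 3 := charP_of_card_eq_prime_pow hcard
  have h3 : (3 : F) = 0 := CharP.ofNat_eq_zero F 3
  have h2 : (2 : F) ≠ 0 := Ring.two_ne_zero (by rw [ringChar.eq F 3]; decide)
  have hm1 : ¬IsSquare (-1 : F) := by
    rw [FiniteField.isSquare_neg_one_iff, hcard, three_pow_mod_four_of_odd hodd]
    exact not_not.mpr rfl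
  have hsq : ∀ s : F, s ≠ 0 → (IsSquare (-(s * (a * b) ^ 2)) ↔ ¬IsSquare s) := fun s hs => by
    rw [← neg_mul, isSquare_mul_sq_iff hab, FiniteField.isSquare_neg_iff_not_isSquare hm1 hs]
  simp only [secondDiff_pow_seven_of_three_eq_zero h3, neg_eq_zero, mul_eq_zero_iff_left hab]
  refine ⟨fun ⟨hs0, hs⟩ => ?_, fun hs => ?_⟩
  · exact card_filter_cubic_eq_zero_of_not_isSquare _ ((hsq _ hs0).not.mpr (not_not.mpr hs))
  · have hs0 : a ^ 2 + b ^ 2 ≠ 0 := fun h => hs (h ▸ IsSquare.zero)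
    exact card_filter_cubic_eq_zero_of_isSquare _ h2 hs0 (pow_ne_zero 2 hab) ((hsq _ hs0).mpr hs)

theorem stmt_16 (n : ℕ) (hn : 0 < n) (hodd : Odd n)
    (F : Type) [Field F] [Fintype F] [DecidableEq F]
    (hcard : Fintype.card F = 3 ^ n)
    (a b : F) (hab : a * b ≠ 0) :
    ((a ^ 2 + b ^ 2 ≠ 0 ∧ IsSquare (a ^ 2 + b ^ 2) →
      (Finset.univ.filter (fun x : F =>
        (x + a + b) ^ 7 - (x + b) ^ 7 - (x + a) ^ 7 + x ^ 7 = 0)).card = 1) ∧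
     (¬ IsSquare (a ^ 2 + b ^ 2) →
      (Finset.univ.filter (fun x : F =>
        (x + a + b) ^ 7 - (x + b) ^ 7 - (x + a) ^ 7 + x ^ 7 = 0)).card = 3)) :=
  stmt_16_general n hodd F hcard a b hab
end

section
/- Let n be an even positive integer and let F(x) = x^7 on F_{3^n}. For all a, b ∈ F_{3^n} with ab ≠ 0 and a^2 + b^2 = 0, ∇_F(a,b) = 1. -/
/-!
In characteristic 3 the second difference of `x ^ 7` in the directions `a`, `b` is
`a b (a² + b²)(a³ + b³ - x³) - a³ b³ (x - (a + b))`, as one sees by expanding and reducing the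
binomial coefficients mod 3. When `a² + b² = 0` it is therefore affine in `x` with slope
`-a³ b³ ≠ 0`, so its only zero is `x = a + b`.
-/

theorem second_difference_pow_seven_of_charP_three {R : Type*} [CommRing R] [CharP R 3]
    (a b x : R) :
    (x + a + b) ^ 7 - (x + b) ^ 7 - (x + a) ^ 7 + x ^ 7 =
      a * b * (a ^ 2 + b ^ 2) * (a ^ 3 + b ^ 3 - x ^ 3) - a ^ 3 * b ^ 3 * (x - (a + b)) := by
  ring_nf
  reduce_mod_char!
  ring_nf

theorem stmt_17_general (n : ℕ)
    (F : Type) [Field F] [Fintype F] [DecidableEq F]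
    (hcard : Fintype.card F = 3 ^ n)
    (a b : F) (hab : a * b ≠ 0) (hzero : a ^ 2 + b ^ 2 = 0) :
    (Finset.univ.filter (fun x : F =>
      (x + a + b) ^ 7 - (x + b) ^ 7 - (x + a) ^ 7 + x ^ 7 = 0)).card = 1 := by
  have : CharP F 3 := charP_of_card_eq_prime_pow hcard
  have hslope : a ^ 3 * b ^ 3 ≠ 0 := by
    rw [← mul_pow]
    exact pow_ne_zero 3 hab
  simp_rw [second_difference_pow_seven_of_charP_three, hzero, mul_zero, zero_mul, zero_sub,
    neg_eq_zero, mul_eq_zero_iff_left hslope, sub_eq_zero]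
  rw [Finset.filter_eq', if_pos (Finset.mem_univ _), Finset.card_singleton]

theorem stmt_17 (n : ℕ) (hn : 0 < n) (heven : Even n)
    (F : Type) [Field F] [Fintype F] [DecidableEq F]
    (hcard : Fintype.card F = 3 ^ n)
    (a b : F) (hab : a * b ≠ 0) (hzero : a ^ 2 + b ^ 2 = 0) :
    (Finset.univ.filter (fun x : F =>
      (x + a + b) ^ 7 - (x + b) ^ 7 - (x + a) ^ 7 + x ^ 7 = 0)).card = 1 :=
  stmt_17_general n F hcard a b hab hzero
end

section
/- Let n be an even positive integer and let F(x) = x^7 on F_{3^n}. For all a, b ∈ F_{3^n} with ab ≠ 0 and a^2 + b^2 ≠ 0: if η(a^2+b^2) = 1 then ∇_F(a,b) = 3, and if η(a^2+b^2) = −1 then ∇_F(a,b) = 1. -/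
/-!
In characteristic 3, with `y = x - (a + b)`, the second difference of `x ↦ x ^ 7` factors as
`-(a b) · y · ((a² + b²) y² + (a b)²)`. Its zeros are `y = 0` and the square roots of
`-(a b)² / (a² + b²)`, of which there are `1 + η(-(a² + b²))`. For `n` even, `3 ^ n ≡ 1 mod 4`,
so `-1` is a square and `η(-(a² + b²)) = η(a² + b²)`.
-/

open Finset

theorem seventh_pow_second_diff_eq {R : Type*} [CommRing R] (h3 : (3 : R) = 0) (x a b : R) :
    (x + a + b) ^ 7 - (x + b) ^ 7 - (x + a) ^ 7 + x ^ 7 =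
      -(a * b) * ((x - (a + b)) * ((a ^ 2 + b ^ 2) * (x - (a + b)) ^ 2 + (a * b) ^ 2)) := by
  -- the coefficient of `h3` is (left side - right side) / 3, computed over `ℤ`
  linear_combination a * b * (14 * x ^ 5 + 35 * (a + b) * x ^ 4
    + (47 * a ^ 2 + 70 * a * b + 47 * b ^ 2) * x ^ 3
    + (34 * a ^ 3 + 69 * a ^ 2 * b + 69 * a * b ^ 2 + 34 * b ^ 3) * x ^ 2
    + (15 * a ^ 4 + 37 * a ^ 3 * b + 49 * a ^ 2 * b ^ 2 + 37 * a * b ^ 3 + 15 * b ^ 4) * x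
    + 2 * a ^ 5 + 6 * a ^ 4 * b + 10 * a ^ 3 * b ^ 2 + 10 * a ^ 2 * b ^ 3 + 6 * a * b ^ 4
    + 2 * b ^ 5) * h3

theorem isSquare_neg_one_of_card_eq_sq {F : Type*} [Field F] [Fintype F] {q : ℕ} (hq : Odd q)
    (hcard : Fintype.card F = q ^ 2) : IsSquare (-1 : F) := by
  rw [FiniteField.isSquare_neg_one_iff, hcard]
  obtain ⟨k, rfl⟩ := hq
  ring_nf
  omega

section Counting

variable {F : Type*} [Field F] [Fintype F] [DecidableEq F]

theorem card_filter_mul_mul_sq_add_sq_eq_zero (hF : ringChar F ≠ 2) {s t : F} (hs : s ≠ 0)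
    (ht : t ≠ 0) :
    (#{y : F | y * (s * y ^ 2 + t ^ 2) = 0} : ℤ) = quadraticChar F (-s) + 2 := by
  have hsplit : ({y : F | y * (s * y ^ 2 + t ^ 2) = 0} : Finset F)
      = insert 0 {y : F | y ^ 2 = -t ^ 2 / s}.toFinset := by
    ext y
    simp only [mem_filter, mem_univ, true_and, mem_insert, Set.mem_toFinset, Set.mem_ofPred_eq,
      mul_eq_zero, eq_div_iff hs]
    constructor <;> rintro (h | h) <;> [left; right; left; right] <;> linear_combination h
  have h0 : (0 : F) ∉ {y : F | y ^ 2 = -t ^ 2 / s}.toFinset := by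
    simp [eq_div_iff hs, ht]
  have hchar : quadraticChar F (-t ^ 2 / s) = quadraticChar F (-s) := by
    rw [show -t ^ 2 / s = (t / s) ^ 2 * -s by field_simp, map_mul,
      quadraticChar_sq_one' (div_ne_zero ht hs), one_mul]
  rw [hsplit, card_insert_of_notMem h0, Nat.cast_succ, quadraticChar_card_sqrts hF, hchar]
  ring

theorem card_filter_seventh_pow_second_diff_eq_zero [CharP F 3] {a b : F} (hab : a * b ≠ 0)
    (hne : a ^ 2 + b ^ 2 ≠ 0) :
    (#{x : F | (x + a + b) ^ 7 - (x + b) ^ 7 - (x + a) ^ 7 + x ^ 7 = 0} : ℤ) =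
      quadraticChar F (-(a ^ 2 + b ^ 2)) + 2 := by
  have h3 : (3 : F) = 0 := by exact_mod_cast CharP.cast_eq_zero F 3
  have hF : ringChar F ≠ 2 := by rw [ringChar.eq F 3]; norm_num
  rw [← card_filter_mul_mul_sq_add_sq_eq_zero hF hne hab, Nat.cast_inj]
  refine card_equiv (Equiv.subRight (a + b)) fun x => ?_
  simp only [mem_filter, mem_univ, true_and, Equiv.subRight_apply, seventh_pow_second_diff_eq h3,
    neg_mul, neg_eq_zero, mul_eq_zero_iff_left hab]

end Counting

theorem stmt_18_general (n : ℕ) (heven : Even n)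
    (F : Type) [Field F] [Fintype F] [DecidableEq F]
    (hcard : Fintype.card F = 3 ^ n)
    (a b : F) (hab : a * b ≠ 0) (hne : a ^ 2 + b ^ 2 ≠ 0) :
    ((IsSquare (a ^ 2 + b ^ 2) →
      (Finset.univ.filter (fun x : F =>
        (x + a + b) ^ 7 - (x + b) ^ 7 - (x + a) ^ 7 + x ^ 7 = 0)).card = 3) ∧
     (¬ IsSquare (a ^ 2 + b ^ 2) →
      (Finset.univ.filter (fun x : F =>
        (x + a + b) ^ 7 - (x + b) ^ 7 - (x + a) ^ 7 + x ^ 7 = 0)).card = 1)) := by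
  have : CharP F 3 := charP_of_card_eq_prime_pow hcard
  have hneg : quadraticChar F (-1) = 1 := by
    obtain ⟨k, rfl⟩ := heven
    rw [quadraticChar_one_iff_isSquare (neg_ne_zero.2 one_ne_zero)]
    exact isSquare_neg_one_of_card_eq_sq (q := 3 ^ k) (Odd.pow (by decide)) (by rw [hcard]; ring)
  have hcount := card_filter_seventh_pow_second_diff_eq_zero hab hne
  rw [neg_eq_neg_one_mul, map_mul, hneg, one_mul] at hcount
  refine ⟨fun hsq => ?_, fun hns => ?_⟩
  · have := (quadraticChar_one_iff_isSquare hne).2 hsq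
    omega
  · have := quadraticChar_neg_one_iff_not_isSquare.2 hns
    omega

theorem stmt_18 (n : ℕ) (hn : 0 < n) (heven : Even n)
    (F : Type) [Field F] [Fintype F] [DecidableEq F]
    (hcard : Fintype.card F = 3 ^ n)
    (a b : F) (hab : a * b ≠ 0) (hne : a ^ 2 + b ^ 2 ≠ 0) :
    ((IsSquare (a ^ 2 + b ^ 2) →
      (Finset.univ.filter (fun x : F =>
        (x + a + b) ^ 7 - (x + b) ^ 7 - (x + a) ^ 7 + x ^ 7 = 0)).card = 3) ∧
     (¬ IsSquare (a ^ 2 + b ^ 2) →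
      (Finset.univ.filter (fun x : F =>
        (x + a + b) ^ 7 - (x + b) ^ 7 - (x + a) ^ 7 + x ^ 7 = 0)).card = 1)) :=
  stmt_18_general n heven F hcard a b hab hne
end
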